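/- arXiv:1005.2012 — 5 statements merged into one kernel-verified Lean document; each statement's English description precedes it below -/
import Mathlib

section
/- Let {g(t)}_{t=1}^T ⊂ ℝ^d be an arbitrary sequence of vectors, {α(t)}_{t=0}^T a non-increasing sequence of positive stepsizes, and define z(t) = Σ_{s=1}^{t−1} g(s) and x(t) = argmin_{x ∈ X} { ⟨z(t), x⟩ + (1/α(t−1)) ψ(x) }. Then for any x* ∈ X: Σ_{t=1}^T ⟨g(t), x(t) − x*⟩ ≤ (1/2) Σ_{t=1}^T α(t−1) ‖g(t)‖_*² + (1/α(T)) ψ(x*). -/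
/-!
Let `M t = min_{y ∈ X} ⟨z t, y⟩ + ψ y / α (t - 1)`, attained at `x t`. This objective is
`1 / α (t - 1)`-strongly convex, so it grows by `‖x t - x (t + 1)‖² / (2 α (t - 1))` from `x t`
to `x (t + 1)`; by Young's inequality this pays for
`⟨g t, x t - x (t + 1)⟩ ≤ ‖g t‖_* ‖x t - x (t + 1)‖` up to `α (t - 1) ‖g t‖_*² / 2`, and
shrinking the stepsize only raises the `ψ`-term since `ψ ≥ 0`. Hence
`M t + ⟨g t, x t⟩ - α (t - 1) ‖g t‖_*² / 2 ≤ M (t + 1)`, and telescoping from `M 1 ≥ 0` to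
`M (T + 1) ≤ ⟨z (T + 1), x*⟩ + ψ x* / α T` gives the regret bound.
-/

open Finset Filter Topology

section NormLike

variable {E : Type*} [AddCommGroup E] [Module ℝ E] [FiniteDimensional ℝ E] {nrm : E → ℝ}

theorem exists_linearMap_le_mul (hnonneg : ∀ v, 0 ≤ nrm v) (heq : ∀ v, nrm v = 0 ↔ v = 0)
    (hadd : ∀ u v, nrm (u + v) ≤ nrm u + nrm v) (hsmul : ∀ (c : ℝ) v, nrm (c • v) = |c| * nrm v)
    (ℓ : E →ₗ[ℝ] ℝ) : ∃ C, ∀ u, ℓ u ≤ C * nrm u := by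
  -- with `nrm` as its norm, `E` is a finite-dimensional normed space, where `ℓ` is continuous
  let : Norm E := ⟨nrm⟩
  let core : NormedSpace.Core ℝ E := ⟨⟨hnonneg, hsmul, hadd⟩, heq⟩
  let := NormedAddCommGroup.ofCore core
  let := NormedSpace.ofCore core
  let L := LinearMap.toContinuousLinearMap ℓ
  exact ⟨‖L‖, fun u => (le_abs_self _).trans (L.le_opNorm u)⟩

theorem linearMap_le_sSup_mul (hnonneg : ∀ v, 0 ≤ nrm v) (heq : ∀ v, nrm v = 0 ↔ v = 0)
    (hadd : ∀ u v, nrm (u + v) ≤ nrm u + nrm v) (hsmul : ∀ (c : ℝ) v, nrm (c • v) = |c| * nrm v)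
    (ℓ : E →ₗ[ℝ] ℝ) (w : E) : ℓ w ≤ sSup {r | ∃ u, nrm u = 1 ∧ r = ℓ u} * nrm w := by
  obtain ⟨C, hC⟩ := exists_linearMap_le_mul hnonneg heq hadd hsmul ℓ
  have hbdd : BddAbove {r | ∃ u, nrm u = 1 ∧ r = ℓ u} := ⟨C, by
    rintro _ ⟨u, hu, rfl⟩
    simpa [hu] using hC u⟩
  rcases (hnonneg w).eq_or_lt with hw | hw
  · rw [← hw, (heq w).1 hw.symm]
    simp
  have hunit : nrm ((nrm w)⁻¹ • w) = 1 := by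
    rw [hsmul, abs_of_pos (inv_pos.2 hw), inv_mul_cancel₀ hw.ne']
  calc ℓ w = ℓ ((nrm w)⁻¹ • w) * nrm w := by
        rw [map_smul, smul_eq_mul, mul_comm, ← mul_assoc, mul_inv_cancel₀ hw.ne', one_mul]
    _ ≤ _ := mul_le_mul_of_nonneg_right (le_csSup hbdd ⟨_, hunit, rfl⟩) hw.le

end NormLike

section StrongConvexity

variable {E : Type*} [AddCommGroup E] [Module ℝ E]

/-- Strong convexity with modulus `μ` with respect to an arbitrary norm `nrm`, which Mathlib's
`StrongConvexOn` (tied to the norm instance) cannot express. -/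
def StrongConvexOnWrt (nrm : E → ℝ) (μ : ℝ) (X : Set E) (f : E → ℝ) : Prop :=
  ∀ x ∈ X, ∀ y ∈ X, ∀ θ : ℝ, 0 ≤ θ → θ ≤ 1 →
    f (θ • x + (1 - θ) • y) ≤ θ * f x + (1 - θ) * f y - μ * (θ * (1 - θ) / 2 * nrm (x - y) ^ 2)

variable {nrm : E → ℝ} {μ : ℝ} {X : Set E} {f : E → ℝ}

theorem StrongConvexOnWrt.linearMap_add_smul (hf : StrongConvexOnWrt nrm μ X f) (ℓ : E →ₗ[ℝ] ℝ)
    {c : ℝ} (hc : 0 ≤ c) : StrongConvexOnWrt nrm (c * μ) X (fun y => ℓ y + c * f y) := by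
  intro x hx y hy θ hθ₀ hθ₁
  have := mul_le_mul_of_nonneg_left (hf x hx y hy θ hθ₀ hθ₁) hc
  simp only [map_add, map_smul, smul_eq_mul]
  linarith

theorem StrongConvexOnWrt.add_sq_le_of_isMinOn (hf : StrongConvexOnWrt nrm μ X f)
    (hX : Convex ℝ X) {a y : E} (ha : a ∈ X) (hmin : IsMinOn f X a) (hy : y ∈ X) :
    f a + μ / 2 * nrm (a - y) ^ 2 ≤ f y := by
  -- compare `a` with `θ • a + (1 - θ) • y`, then let `θ → 1`
  have hθ : ∀ θ ∈ Set.Ioo (0 : ℝ) 1, f a + θ * μ / 2 * nrm (a - y) ^ 2 ≤ f y := by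
    rintro θ ⟨hθ₀, hθ₁⟩
    have hmem : θ • a + (1 - θ) • y ∈ X := hX ha hy hθ₀.le (by linarith) (by ring)
    have hle := (hmin hmem).trans (hf a ha y hy θ hθ₀.le hθ₁.le)
    have : (1 - θ) * (f a + θ * μ / 2 * nrm (a - y) ^ 2) ≤ (1 - θ) * f y := by linarith
    exact le_of_mul_le_mul_left this (by linarith)
  have hlim : Tendsto (fun θ : ℝ => f a + θ * μ / 2 * nrm (a - y) ^ 2) (𝓝[<] 1)
      (𝓝 (f a + 1 * μ / 2 * nrm (a - y) ^ 2)) :=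
    tendsto_nhdsWithin_of_tendsto_nhds (Continuous.tendsto (by fun_prop) 1)
  rw [one_mul] at hlim
  exact le_of_tendsto hlim (eventually_of_mem (Ioo_mem_nhdsLT one_pos) hθ)

end StrongConvexity

theorem add_sum_Icc_le_of_add_le_succ {a b : ℕ → ℝ} (h : ∀ t, 1 ≤ t → a t + b t ≤ a (t + 1))
    (n : ℕ) : a 1 + ∑ t ∈ Icc 1 n, b t ≤ a (n + 1) := by
  induction n with
  | zero => simp
  | succ n ih =>
    rw [sum_Icc_succ_top (by omega)]
    linarith [h (n + 1) (by omega)]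

theorem mul_le_half_mul_sq_add_half_inv_mul_sq {a : ℝ} (ha : 0 < a) (u v : ℝ) :
    u * v ≤ a / 2 * u ^ 2 + a⁻¹ / 2 * v ^ 2 := by
  have := div_nonneg (sq_nonneg (a * u - v)) ha.le
  field_simp
  nlinarith

theorem dualAveraging_potential_step {ι : Type*} [Fintype ι] {nrm ψ : (ι → ℝ) → ℝ}
    {X : Set (ι → ℝ)} (hX : Convex ℝ X) (hψ : StrongConvexOnWrt nrm 1 X ψ)
    {g z x x' : ι → ℝ} {D a a' : ℝ} (hg : ∀ w, g ⬝ᵥ w ≤ D * nrm w) (ha' : 0 < a') (haa' : a' ≤ a)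
    (hx : x ∈ X) (hmin : IsMinOn (fun y => z ⬝ᵥ y + a⁻¹ * ψ y) X x) (hx' : x' ∈ X)
    (hψx' : 0 ≤ ψ x') :
    z ⬝ᵥ x + a⁻¹ * ψ x + (g ⬝ᵥ x - a / 2 * D ^ 2) ≤ (z + g) ⬝ᵥ x' + a'⁻¹ * ψ x' := by
  have ha : 0 < a := ha'.trans_le haa'
  have hgrowth : z ⬝ᵥ x + a⁻¹ * ψ x + a⁻¹ * 1 / 2 * nrm (x - x') ^ 2 ≤ z ⬝ᵥ x' + a⁻¹ * ψ x' :=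
    (hψ.linearMap_add_smul (dotProductBilin ℝ ℝ z) (inv_nonneg.2 ha.le)).add_sq_le_of_isMinOn
      hX hx hmin hx'
  have hpair : g ⬝ᵥ x - g ⬝ᵥ x' ≤ D * nrm (x - x') := dotProduct_sub g x x' ▸ hg _
  have hyoung := mul_le_half_mul_sq_add_half_inv_mul_sq ha D (nrm (x - x'))
  have hψ_step : a⁻¹ * ψ x' ≤ a'⁻¹ * ψ x' := by gcongr
  rw [add_dotProduct]
  linarith

theorem dual_averaging_regret_general {d : ℕ}
    (X : Set (Fin d → ℝ)) (hXconv : Convex ℝ X)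
    -- an arbitrary norm on ℝ^d and its dual norm
    (nrm : (Fin d → ℝ) → ℝ)
    (hnrm_nonneg : ∀ v, 0 ≤ nrm v)
    (hnrm_eq_zero : ∀ v, nrm v = 0 ↔ v = 0)
    (hnrm_add : ∀ u v, nrm (u + v) ≤ nrm u + nrm v)
    (hnrm_smul : ∀ (c : ℝ) v, nrm (c • v) = |c| * nrm v)
    (dnrm : (Fin d → ℝ) → ℝ)
    (hdnrm : ∀ v, dnrm v = sSup {r | ∃ u : Fin d → ℝ, nrm u = 1 ∧ r = ∑ i, v i * u i})
    -- ψ is 1-strongly convex w.r.t. nrm, nonnegative on X, with ψ(0) = 0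
    (ψ : (Fin d → ℝ) → ℝ)
    (hstrong : ∀ x ∈ X, ∀ y ∈ X, ∀ θ : ℝ, 0 ≤ θ → θ ≤ 1 →
      ψ (θ • x + (1 - θ) • y) ≤
        θ * ψ x + (1 - θ) * ψ y - θ * (1 - θ) / 2 * nrm (x - y) ^ 2)
    (hψ_nonneg : ∀ x ∈ X, 0 ≤ ψ x)
    -- time horizon, gradients, non-increasing positive stepsizes
    (T : ℕ)
    (g : ℕ → (Fin d → ℝ))
    (α : ℕ → ℝ) (hαpos : ∀ t, 0 < α t) (hαanti : ∀ s t : ℕ, s ≤ t → α t ≤ α s)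
    -- the dual averaging iterates
    (z x : ℕ → (Fin d → ℝ))
    (hz : ∀ t : ℕ, z t = ∑ s ∈ Finset.Icc 1 (t - 1), g s)
    (hx_mem : ∀ t, x t ∈ X)
    (hx_min : ∀ t : ℕ, 1 ≤ t → ∀ y ∈ X,
      (∑ i, z t i * x t i) + (1 / α (t - 1)) * ψ (x t) ≤
        (∑ i, z t i * y i) + (1 / α (t - 1)) * ψ y)
    (xstar : Fin d → ℝ) (hxstar : xstar ∈ X) :
    ∑ t ∈ Finset.Icc 1 T, (∑ i, g t i * (x t i - xstar i)) ≤
      (1 / 2) * ∑ t ∈ Finset.Icc 1 T, α (t - 1) * dnrm (g t) ^ 2 +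
        (1 / α T) * ψ xstar := by
  simp only [one_div] at hx_min ⊢
  have hpair (v w : Fin d → ℝ) : v ⬝ᵥ w ≤ dnrm v * nrm w :=
    hdnrm v ▸ linearMap_le_sSup_mul hnrm_nonneg hnrm_eq_zero hnrm_add hnrm_smul
      (dotProductBilin ℝ ℝ v) w
  have hψ : StrongConvexOnWrt nrm 1 X ψ := fun x hx y hy θ h₀ h₁ => by
    simpa only [one_mul] using hstrong x hx y hy θ h₀ h₁
  have hmin (t : ℕ) (ht : 1 ≤ t) :
      IsMinOn (fun y => z t ⬝ᵥ y + (α (t - 1))⁻¹ * ψ y) X (x t) :=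
    isMinOn_iff.2 (hx_min t ht)
  have hz_succ (t : ℕ) (ht : 1 ≤ t) : z (t + 1) = z t + g t := by
    obtain ⟨k, rfl⟩ := Nat.exists_eq_add_of_le' ht
    simp [hz, sum_Icc_succ_top]
  set M : ℕ → ℝ := fun t => z t ⬝ᵥ x t + (α (t - 1))⁻¹ * ψ (x t)
  have hstep (t : ℕ) (ht : 1 ≤ t) :
      M t + (g t ⬝ᵥ x t - 2⁻¹ * (α (t - 1) * dnrm (g t) ^ 2)) ≤ M (t + 1) := by
    have := dualAveraging_potential_step hXconv hψ (hpair (g t)) (hαpos t)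
      (hαanti _ _ (Nat.sub_le t 1)) (hx_mem t) (hmin t ht) (hx_mem (t + 1)) (hψ_nonneg _ (hx_mem _))
    rw [← hz_succ t ht] at this
    simp only [M, Nat.add_sub_cancel]
    linarith
  have hM_one : 0 ≤ M 1 := by
    simpa [M, hz] using mul_nonneg (inv_nonneg.2 (hαpos 0).le) (hψ_nonneg _ (hx_mem 1))
  have hM_last : M (T + 1) ≤ (∑ t ∈ Icc 1 T, g t) ⬝ᵥ xstar + (α T)⁻¹ * ψ xstar := by
    simpa [M, hz] using hmin (T + 1) (by omega) hxstar
  have htele := add_sum_Icc_le_of_add_le_succ hstep T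
  rw [sum_sub_distrib, ← mul_sum] at htele
  rw [sum_dotProduct] at hM_last
  show ∑ t ∈ Icc 1 T, g t ⬝ᵥ (x t - xstar) ≤ _
  simp only [dotProduct_sub, sum_sub_distrib]
  linarith

/-- Regret bound for the (centralized) dual averaging / lazy
projection algorithm: with `z(t) = Σ_{s=1}^{t−1} g(s)` and
`x(t) = argmin_{x ∈ X} { ⟨z(t), x⟩ + (1/α(t−1)) ψ(x) }`, for any `x* ∈ X`,
`Σ_{t=1}^T ⟨g(t), x(t) − x*⟩ ≤ (1/2) Σ_{t=1}^T α(t−1) ‖g(t)‖_*² + ψ(x*)/α(T)`. -/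
theorem dual_averaging_regret {d : ℕ}
    (X : Set (Fin d → ℝ)) (hXclosed : IsClosed X) (hXconv : Convex ℝ X)
    (h0X : (0 : Fin d → ℝ) ∈ X)
    -- an arbitrary norm on ℝ^d and its dual norm
    (nrm : (Fin d → ℝ) → ℝ)
    (hnrm_nonneg : ∀ v, 0 ≤ nrm v)
    (hnrm_eq_zero : ∀ v, nrm v = 0 ↔ v = 0)
    (hnrm_add : ∀ u v, nrm (u + v) ≤ nrm u + nrm v)
    (hnrm_smul : ∀ (c : ℝ) v, nrm (c • v) = |c| * nrm v)
    (dnrm : (Fin d → ℝ) → ℝ)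
    (hdnrm : ∀ v, dnrm v = sSup {r | ∃ u : Fin d → ℝ, nrm u = 1 ∧ r = ∑ i, v i * u i})
    -- ψ is 1-strongly convex w.r.t. nrm, nonnegative on X, with ψ(0) = 0
    (ψ : (Fin d → ℝ) → ℝ)
    (hstrong : ∀ x ∈ X, ∀ y ∈ X, ∀ θ : ℝ, 0 ≤ θ → θ ≤ 1 →
      ψ (θ • x + (1 - θ) • y) ≤
        θ * ψ x + (1 - θ) * ψ y - θ * (1 - θ) / 2 * nrm (x - y) ^ 2)
    (hψ_nonneg : ∀ x ∈ X, 0 ≤ ψ x) (hψ0 : ψ 0 = 0)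
    -- time horizon, gradients, non-increasing positive stepsizes
    (T : ℕ) (hT : 1 ≤ T)
    (g : ℕ → (Fin d → ℝ))
    (α : ℕ → ℝ) (hαpos : ∀ t, 0 < α t) (hαanti : ∀ s t : ℕ, s ≤ t → α t ≤ α s)
    -- the dual averaging iterates
    (z x : ℕ → (Fin d → ℝ))
    (hz : ∀ t : ℕ, z t = ∑ s ∈ Finset.Icc 1 (t - 1), g s)
    (hx_mem : ∀ t, x t ∈ X)
    (hx_min : ∀ t : ℕ, 1 ≤ t → ∀ y ∈ X,
      (∑ i, z t i * x t i) + (1 / α (t - 1)) * ψ (x t) ≤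
        (∑ i, z t i * y i) + (1 / α (t - 1)) * ψ y)
    (xstar : Fin d → ℝ) (hxstar : xstar ∈ X) :
    ∑ t ∈ Finset.Icc 1 T, (∑ i, g t i * (x t i - xstar i)) ≤
      (1 / 2) * ∑ t ∈ Finset.Icc 1 T, α (t - 1) * dnrm (g t) ^ 2 +
        (1 / α T) * ψ xstar :=
  dual_averaging_regret_general X hXconv nrm hnrm_nonneg hnrm_eq_zero hnrm_add hnrm_smul dnrm hdnrm
    ψ hstrong hψ_nonneg T g α hαpos hαanti z x hz hx_mem hx_min xstar hxstar
end

section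
/- Let G be a connected undirected graph on n vertices with adjacency matrix A, degree matrix D, minimum degree δ_min and maximum degree δ_max, and normalized Laplacian L = I − D^{−1/2} A D^{−1/2}. For P = I − (1/(δ_max + 1))(D − A), the second largest singular value satisfies σ₂(P) ≤ max{ 1 − (δ_min/(δ_max+1)) λ_{n−1}(L), (δ_max/(δ_max+1)) λ₁(L) − 1 }, where λ₁(L) ≥ ⋯ ≥ λ_n(L) = 0 are the eigenvalues of L. -/
open Matrix

/-- The ℓ₂ norm on ℝⁿ. -/
noncomputable def l2norm {n : ℕ} (v : Fin n → ℝ) : ℝ := Real.sqrt (∑ i, v i ^ 2)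

/-- The uniform averaging matrix `F = (1/n)𝟙𝟙ᵀ`. -/
noncomputable def uniformMatrix (n : ℕ) : Matrix (Fin n) (Fin n) ℝ :=
  Matrix.of fun _ _ => (1 : ℝ) / n

/-- The second largest singular value of a doubly stochastic matrix `P`, which
equals the largest singular value (ℓ₂ operator norm) of `P − F`. -/
noncomputable def sigma2 {n : ℕ} (P : Matrix (Fin n) (Fin n) ℝ) : ℝ :=
  sSup {r | ∃ x : Fin n → ℝ, l2norm x ≤ 1 ∧ r = l2norm ((P - uniformMatrix n).mulVec x)}

/-!
The matrix `P = 1 - t Q`, with `Q = D - A` and `t = 1 / (δ_max + 1)`, is symmetric and fixes `𝟙`,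
so `σ₂(P) = ‖P - F‖` is at most the largest value of `|yᵀ P y| / yᵀ y` over `y ⊥ 𝟙`, and
`yᵀ P y = yᵀ y - t yᵀ Q y`. Since `Q = D^{1/2} L D^{1/2}`, the Rayleigh quotient of `L` at
`D^{1/2} y` gives `yᵀ Q y ≤ λ₁ ∑ δᵢ yᵢ² ≤ δ_max λ₁ yᵀ y`. For the lower bound, replace `y` by
`y + s 𝟙` with `s` chosen so that `D^{1/2} (y + s 𝟙) ⊥ D^{1/2} 𝟙`: the shift leaves `yᵀ Q y`
unchanged and, as `y ⊥ 𝟙`, does not decrease `yᵀ y`, whence `δ_min λ_{n-1} yᵀ y ≤ yᵀ Q y`.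
-/

namespace Matrix

theorem norm_toEuclideanCLM_le_of_abs_dotProduct_mulVec_le {ι : Type*} [Fintype ι]
    [DecidableEq ι] {M : Matrix ι ι ℝ} (hM : Mᵀ = M) {c : ℝ} (hc : 0 ≤ c)
    (h : ∀ x, |x ⬝ᵥ M *ᵥ x| ≤ c * (x ⬝ᵥ x)) :
    ‖toEuclideanCLM (𝕜 := ℝ) M‖ ≤ c := by
  have hsymm : (toEuclideanCLM (𝕜 := ℝ) M).IsSymmetric :=
    isSymmetric_toEuclideanLin_iff.mpr hM
  rw [ContinuousLinearMap.norm_eq_iSup_rayleighQuotient _ hsymm]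
  refine ciSup_le fun x => ?_
  rcases eq_or_ne x 0 with rfl | hx
  · simpa using hc
  have hx2 : 0 < ‖x‖ ^ 2 := by positivity
  rw [ContinuousLinearMap.rayleighQuotient, ContinuousLinearMap.reApplyInnerSelf_apply,
    abs_div, abs_sq, div_le_iff₀ hx2, ← real_inner_self_eq_norm_sq, real_inner_comm,
    inner_toEuclideanCLM, EuclideanSpace.inner_eq_star_dotProduct]
  exact h x.ofLp

end Matrix

theorem dotProduct_self_le_add_smul_one_of_sum_eq_zero {ι : Type*} [Fintype ι] {y : ι → ℝ}
    (hy : ∑ i, y i = 0) (s : ℝ) : y ⬝ᵥ y ≤ (y + s • 1) ⬝ᵥ (y + s • 1) := by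
  simp only [add_dotProduct, dotProduct_add, smul_dotProduct, dotProduct_smul]
  rw [dotProduct_one, one_dotProduct, hy, one_dotProduct_one, smul_eq_mul, smul_eq_mul,
    smul_eq_mul]
  nlinarith [sq_nonneg s, (Nat.cast_nonneg (Fintype.card ι) : (0 : ℝ) ≤ _)]

theorem l2norm_eq_norm_toLp {n : ℕ} (v : Fin n → ℝ) : l2norm v = ‖WithLp.toLp 2 v‖ := by
  simp [l2norm, EuclideanSpace.norm_eq]

theorem sigma2_le_norm_toEuclideanCLM {n : ℕ} (P : Matrix (Fin n) (Fin n) ℝ) :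
    sigma2 P ≤ ‖toEuclideanCLM (𝕜 := ℝ) (P - uniformMatrix n)‖ := by
  refine Real.sSup_le ?_ (norm_nonneg _)
  rintro r ⟨x, hx, rfl⟩
  rw [l2norm_eq_norm_toLp] at hx ⊢
  rw [← toEuclideanCLM_toLp]
  exact (ContinuousLinearMap.le_opNorm _ _).trans (mul_le_of_le_one_right (norm_nonneg _) hx)

theorem sigma2_le_of_abs_dotProduct_mulVec_le {n : ℕ} {P : Matrix (Fin n) (Fin n) ℝ}
    (hsym : Pᵀ = P) (hone : P *ᵥ 1 = 1) {c : ℝ} (hc : 0 ≤ c)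
    (h : ∀ y, ∑ i, y i = 0 → |y ⬝ᵥ P *ᵥ y| ≤ c * (y ⬝ᵥ y)) :
    sigma2 P ≤ c := by
  refine (sigma2_le_norm_toEuclideanCLM P).trans
    (norm_toEuclideanCLM_le_of_abs_dotProduct_mulVec_le ?_ hc fun x => ?_)
  · rw [transpose_sub, hsym]
    rfl
  set m := (∑ i, x i) / n
  set y := x - m • 1
  have hx : x = y + m • 1 := (sub_add_cancel x _).symm
  have hy : ∑ i, y i = 0 := by
    rcases eq_or_ne n 0 with rfl | hn
    · simp
    · simp only [y, m, Pi.sub_apply, Pi.smul_apply, Pi.one_apply, smul_eq_mul, mul_one,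
        Finset.sum_sub_distrib, Finset.sum_const, Finset.card_univ, Fintype.card_fin,
        nsmul_eq_mul]
      field_simp
      ring
  have hFx : uniformMatrix n *ᵥ x = m • 1 := by
    ext i
    simp [uniformMatrix, mulVec, dotProduct, m, Finset.mul_sum, div_eq_inv_mul]
  have hPx : (P - uniformMatrix n) *ᵥ x = P *ᵥ y := by
    rw [sub_mulVec, hFx, hx, mulVec_add, mulVec_smul, hone, add_sub_cancel_right]
  have hquad : x ⬝ᵥ (P - uniformMatrix n) *ᵥ x = y ⬝ᵥ P *ᵥ y := by
    rw [hPx, hx, add_dotProduct, smul_dotProduct, dotProduct_mulVec 1, ← mulVec_transpose,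
      hsym, hone, one_dotProduct, hy, smul_zero, add_zero]
  have hnorm : y ⬝ᵥ y ≤ x ⬝ᵥ x := hx ▸ dotProduct_self_le_add_smul_one_of_sum_eq_zero hy m
  rw [hquad]
  exact (h y hy).trans (mul_le_mul_of_nonneg_left hnorm hc)

section Laplacian

variable {ι : Type*} [Fintype ι] [DecidableEq ι] {A L : Matrix ι ι ℝ} {δ : ι → ℝ}

theorem laplacian_mulVec_one (hδ : ∀ i, δ i = ∑ j, A i j) : (diagonal δ - A) *ᵥ 1 = 0 := by
  ext i
  rw [sub_mulVec, Pi.sub_apply, mulVec_diagonal, Pi.one_apply, mul_one, hδ]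
  simp [mulVec, dotProduct_one]

theorem dotProduct_laplacian_mulVec (hsym : Aᵀ = A) (hδ : ∀ i, δ i = ∑ j, A i j) (x : ι → ℝ) :
    x ⬝ᵥ (diagonal δ - A) *ᵥ x = (∑ i, ∑ j, A i j * (x i - x j) ^ 2) / 2 := by
  have hswap : ∑ i, ∑ j, A i j * x j ^ 2 = ∑ i, ∑ j, A i j * x i ^ 2 := by
    rw [Finset.sum_comm]
    refine Finset.sum_congr rfl fun i _ => Finset.sum_congr rfl fun j _ => ?_
    rw [← transpose_apply A i j, hsym]
  have hexpand : ∑ i, ∑ j, A i j * (x i - x j) ^ 2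
      = ∑ i, ∑ j, A i j * x i ^ 2 + ∑ i, ∑ j, A i j * x j ^ 2
        - 2 * ∑ i, ∑ j, A i j * (x i * x j) := by
    simp only [Finset.mul_sum, ← Finset.sum_add_distrib, ← Finset.sum_sub_distrib]
    exact Finset.sum_congr rfl fun i _ => Finset.sum_congr rfl fun j _ => by ring
  have hdiag : x ⬝ᵥ diagonal δ *ᵥ x = ∑ i, ∑ j, A i j * x i ^ 2 := by
    simp only [dotProduct, mulVec_diagonal, hδ, Finset.mul_sum, Finset.sum_mul]
    exact Finset.sum_congr rfl fun i _ => Finset.sum_congr rfl fun j _ => by ring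
  have hadj : x ⬝ᵥ A *ᵥ x = ∑ i, ∑ j, A i j * (x i * x j) := by
    simp only [dotProduct, mulVec, Finset.mul_sum]
    exact Finset.sum_congr rfl fun i _ => Finset.sum_congr rfl fun j _ => by ring
  rw [hexpand, hswap, sub_mulVec, dotProduct_sub, hdiag, hadj]
  ring

theorem dotProduct_laplacian_mulVec_nonneg (hsym : Aᵀ = A) (hδ : ∀ i, δ i = ∑ j, A i j)
    (hA : ∀ i j, 0 ≤ A i j) (x : ι → ℝ) : 0 ≤ x ⬝ᵥ (diagonal δ - A) *ᵥ x := by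
  rw [dotProduct_laplacian_mulVec hsym hδ]
  exact div_nonneg (Finset.sum_nonneg fun i _ => Finset.sum_nonneg fun j _ =>
    mul_nonneg (hA i j) (sq_nonneg _)) zero_le_two

theorem dotProduct_laplacian_mulVec_add_smul_one (hsym : Aᵀ = A) (hδ : ∀ i, δ i = ∑ j, A i j)
    (x : ι → ℝ) (s : ℝ) :
    (x + s • 1) ⬝ᵥ (diagonal δ - A) *ᵥ (x + s • 1) = x ⬝ᵥ (diagonal δ - A) *ᵥ x := by
  simp only [dotProduct_laplacian_mulVec hsym hδ, Pi.add_apply, Pi.smul_apply, Pi.one_apply,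
    add_sub_add_right_eq_sub]

theorem diagonal_sqrt_mul_mul_diagonal_sqrt (hδ0 : ∀ i, 0 < δ i)
    (hL : ∀ i j, L i j = (if i = j then 1 else 0) - A i j / (√(δ i) * √(δ j))) :
    diagonal (fun i => √(δ i)) * L * diagonal (fun i => √(δ i)) = diagonal δ - A := by
  ext i j
  have hij : √(δ i) * √(δ j) ≠ 0 := by have := hδ0 i; have := hδ0 j; positivity
  rw [mul_diagonal, diagonal_mul, hL, Matrix.sub_apply, diagonal_apply]
  split_ifs with h
  · subst h
    rw [mul_right_comm, Real.mul_self_sqrt (hδ0 i).le, mul_sub, mul_one,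
      mul_div_cancel₀ _ (hδ0 i).ne']
  · rw [mul_right_comm, zero_sub, mul_neg, mul_div_cancel₀ _ hij, zero_sub]

theorem dotProduct_sqrt_mul_mulVec_sqrt_mul (hδ0 : ∀ i, 0 < δ i)
    (hL : ∀ i j, L i j = (if i = j then 1 else 0) - A i j / (√(δ i) * √(δ j))) (w : ι → ℝ) :
    (fun i => √(δ i) * w i) ⬝ᵥ L *ᵥ (fun i => √(δ i) * w i) = w ⬝ᵥ (diagonal δ - A) *ᵥ w := by
  have h i j := congrFun (congrFun (diagonal_sqrt_mul_mul_diagonal_sqrt hδ0 hL) i) j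
  simp only [mul_diagonal, diagonal_mul] at h
  simp only [dotProduct, mulVec, Finset.mul_sum, ← h]
  exact Finset.sum_congr rfl fun i _ => Finset.sum_congr rfl fun j _ => by ring

theorem normalizedLaplacian_dotProduct_mulVec_nonneg (hsym : Aᵀ = A)
    (hδ : ∀ i, δ i = ∑ j, A i j) (hA : ∀ i j, 0 ≤ A i j) (hδ0 : ∀ i, 0 < δ i)
    (hL : ∀ i j, L i j = (if i = j then 1 else 0) - A i j / (√(δ i) * √(δ j))) (x : ι → ℝ) :
    0 ≤ x ⬝ᵥ L *ᵥ x := by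
  have hx : x = fun i => √(δ i) * (x i / √(δ i)) :=
    funext fun i => (mul_div_cancel₀ _ (Real.sqrt_pos.mpr (hδ0 i)).ne').symm
  rw [hx, dotProduct_sqrt_mul_mulVec_sqrt_mul hδ0 hL]
  exact dotProduct_laplacian_mulVec_nonneg hsym hδ hA _

theorem normalizedLaplacian_rayleigh_mem_Icc (hsym : Aᵀ = A) (hδ : ∀ i, δ i = ∑ j, A i j)
    (hA : ∀ i j, 0 ≤ A i j) (hδ0 : ∀ i, 0 < δ i)
    (hL : ∀ i j, L i j = (if i = j then 1 else 0) - A i j / (√(δ i) * √(δ j)))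
    {lam lam1 : ℝ} (hub : ∀ x : ι → ℝ, x ⬝ᵥ L *ᵥ x ≤ lam1 * ∑ i, x i ^ 2) {x₀ : ι → ℝ}
    (hx₀ : x₀ ≠ 0) (hx₀L : x₀ ⬝ᵥ L *ᵥ x₀ = lam * ∑ i, x₀ i ^ 2) : lam ∈ Set.Icc 0 lam1 := by
  have hx₀pos : 0 < ∑ i, x₀ i ^ 2 := by
    obtain ⟨i, hi⟩ := Function.ne_iff.mp hx₀
    exact Finset.sum_pos' (fun j _ => sq_nonneg _) ⟨i, Finset.mem_univ i, sq_pos_of_ne_zero hi⟩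
  exact ⟨nonneg_of_mul_nonneg_left
      (hx₀L ▸ normalizedLaplacian_dotProduct_mulVec_nonneg hsym hδ hA hδ0 hL x₀) hx₀pos,
    le_of_mul_le_mul_right (hx₀L ▸ hub x₀) hx₀pos⟩

theorem dotProduct_laplacian_mulVec_le (hδ0 : ∀ i, 0 < δ i)
    (hL : ∀ i j, L i j = (if i = j then 1 else 0) - A i j / (√(δ i) * √(δ j)))
    {dmax lam1 : ℝ} (hdmax : ∀ i, δ i ≤ dmax) (hlam1 : 0 ≤ lam1)
    (hub : ∀ x : ι → ℝ, x ⬝ᵥ L *ᵥ x ≤ lam1 * ∑ i, x i ^ 2) (y : ι → ℝ) :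
    y ⬝ᵥ (diagonal δ - A) *ᵥ y ≤ dmax * lam1 * (y ⬝ᵥ y) := by
  rw [← dotProduct_sqrt_mul_mulVec_sqrt_mul hδ0 hL]
  calc _ ≤ lam1 * ∑ i, (√(δ i) * y i) ^ 2 := hub _
    _ = lam1 * ∑ i, δ i * y i ^ 2 := by simp_rw [mul_pow, Real.sq_sqrt (hδ0 _).le]
    _ ≤ lam1 * ∑ i, dmax * y i ^ 2 := by gcongr with i; exact hdmax i
    _ = dmax * lam1 * (y ⬝ᵥ y) := by simp only [dotProduct, ← Finset.mul_sum, sq]; ring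

theorem mul_dotProduct_self_le_dotProduct_laplacian_mulVec [Nonempty ι] (hsym : Aᵀ = A)
    (hδ : ∀ i, δ i = ∑ j, A i j) (hδ0 : ∀ i, 0 < δ i)
    (hL : ∀ i j, L i j = (if i = j then 1 else 0) - A i j / (√(δ i) * √(δ j)))
    {dmin lam : ℝ} (hdmin : ∀ i, dmin ≤ δ i) (hdmin0 : 0 ≤ dmin) (hlam : 0 ≤ lam)
    (hlb : ∀ x : ι → ℝ, ∑ i, x i * √(δ i) = 0 → lam * ∑ i, x i ^ 2 ≤ x ⬝ᵥ L *ᵥ x)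
    {y : ι → ℝ} (hy : ∑ i, y i = 0) :
    dmin * lam * (y ⬝ᵥ y) ≤ y ⬝ᵥ (diagonal δ - A) *ᵥ y := by
  set s := -(∑ i, δ i * y i) / ∑ i, δ i
  set w := y + s • 1
  have hw : ∑ i, √(δ i) * w i * √(δ i) = 0 := by
    have hpos : 0 < ∑ i, δ i := Finset.sum_pos (fun i _ => hδ0 i) Finset.univ_nonempty
    calc ∑ i, √(δ i) * w i * √(δ i) = ∑ i, δ i * y i + s * ∑ i, δ i := by
          rw [Finset.mul_sum, ← Finset.sum_add_distrib]
          refine Finset.sum_congr rfl fun i _ => ?_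
          simp only [w, Pi.add_apply, Pi.smul_apply, Pi.one_apply, smul_eq_mul, mul_one]
          linear_combination (y i + s) * Real.mul_self_sqrt (hδ0 i).le
      _ = 0 := by rw [div_mul_cancel₀ _ hpos.ne']; ring
  calc dmin * lam * (y ⬝ᵥ y) ≤ lam * (dmin * (w ⬝ᵥ w)) := by
        rw [mul_comm dmin, mul_assoc]
        gcongr
        exact dotProduct_self_le_add_smul_one_of_sum_eq_zero hy _
    _ ≤ lam * ∑ i, (√(δ i) * w i) ^ 2 := by
        simp only [dotProduct, Finset.mul_sum, mul_pow, Real.sq_sqrt (hδ0 _).le, ← sq]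
        gcongr with i
        exact hdmin i
    _ ≤ _ := hlb _ hw
    _ = w ⬝ᵥ (diagonal δ - A) *ᵥ w := dotProduct_sqrt_mul_mulVec_sqrt_mul hδ0 hL w
    _ = y ⬝ᵥ (diagonal δ - A) *ᵥ y := dotProduct_laplacian_mulVec_add_smul_one hsym hδ y _

end Laplacian

theorem abs_sub_mul_le_max_mul {u q t a b : ℝ} (ht : 0 ≤ t) (hu : 0 ≤ u) (ha : a * u ≤ q)
    (hb : q ≤ b * u) : |u - t * q| ≤ max (1 - t * a) (t * b - 1) * u := by
  rw [abs_le]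
  constructor
  · nlinarith [mul_le_mul_of_nonneg_left hb ht,
      mul_le_mul_of_nonneg_right (le_max_right (1 - t * a) (t * b - 1)) hu]
  · nlinarith [mul_le_mul_of_nonneg_left ha ht,
      mul_le_mul_of_nonneg_right (le_max_left (1 - t * a) (t * b - 1)) hu]

theorem sigma2_le_laplacian_bound_general {n : ℕ}
    (A : Matrix (Fin n) (Fin n) ℝ)
    (hsym : Aᵀ = A)
    (h01 : ∀ i j, A i j = 0 ∨ A i j = 1)
    (δ : Fin n → ℝ) (hδ : ∀ i, δ i = ∑ j, A i j)
    (hδ_pos : ∀ i, 1 ≤ δ i)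
    (dmax : ℝ) (hdmax_ub : ∀ i, δ i ≤ dmax)
    (dmin : ℝ) (hdmin_lb : ∀ i, dmin ≤ δ i) (hdmin_mem : ∃ i, δ i = dmin)
    (L : Matrix (Fin n) (Fin n) ℝ)
    (hL : ∀ i j, L i j =
      (if i = j then (1 : ℝ) else 0) - A i j / (Real.sqrt (δ i) * Real.sqrt (δ j)))
    -- λ₁(L): the largest eigenvalue of L, characterized variationally
    (lam1 : ℝ)
    (hlam1_ub : ∀ x : Fin n → ℝ, (∑ i, x i * (L.mulVec x) i) ≤ lam1 * ∑ i, x i ^ 2)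
    -- λ_{n−1}(L): the second smallest eigenvalue of L, characterized
    -- variationally over the orthogonal complement of D^{1/2}𝟙
    (lam : ℝ)
    (hlam_lb : ∀ x : Fin n → ℝ, (∑ i, x i * Real.sqrt (δ i)) = 0 →
      lam * (∑ i, x i ^ 2) ≤ ∑ i, x i * (L.mulVec x) i)
    (hlam_ach : ∃ x : Fin n → ℝ, x ≠ 0 ∧ (∑ i, x i * Real.sqrt (δ i)) = 0 ∧
      (∑ i, x i * (L.mulVec x) i) = lam * ∑ i, x i ^ 2)
    (P : Matrix (Fin n) (Fin n) ℝ)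
    (hP : P = 1 - (1 / (dmax + 1)) • (Matrix.diagonal δ - A)) :
    sigma2 P ≤ max (1 - dmin / (dmax + 1) * lam) (dmax / (dmax + 1) * lam1 - 1) := by
  obtain ⟨i₀, hi₀⟩ := hdmin_mem
  have : Nonempty (Fin n) := ⟨i₀⟩
  have hδ0 i : 0 < δ i := one_pos.trans_le (hδ_pos i)
  have hA i j : 0 ≤ A i j := (h01 i j).elim (·.ge) (fun h => h ▸ zero_le_one)
  have hdmin0 : 0 ≤ dmin := hi₀ ▸ (hδ0 i₀).le
  have hdmin_le : dmin ≤ dmax := hi₀ ▸ hdmax_ub i₀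
  obtain ⟨x₀, hx₀, -, hx₀L⟩ := hlam_ach
  obtain ⟨hlam0, hlam_le⟩ :=
    normalizedLaplacian_rayleigh_mem_Icc hsym hδ hA hδ0 hL hlam1_ub hx₀ hx₀L
  rw [show dmin / (dmax + 1) * lam = 1 / (dmax + 1) * (dmin * lam) by ring,
    show dmax / (dmax + 1) * lam1 = 1 / (dmax + 1) * (dmax * lam1) by ring]
  set t := 1 / (dmax + 1)
  have ht : 0 ≤ t := by have := hdmin0.trans hdmin_le; positivity
  subst hP
  refine sigma2_le_of_abs_dotProduct_mulVec_le ?_ ?_ ?_ fun y hy => ?_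
  · rw [transpose_sub, transpose_one, transpose_smul, transpose_sub, diagonal_transpose, hsym]
  · rw [sub_mulVec, one_mulVec, smul_mulVec, laplacian_mulVec_one hδ, smul_zero, sub_zero]
  · have := mul_le_mul_of_nonneg_left
      (mul_le_mul hdmin_le hlam_le hlam0 (hdmin0.trans hdmin_le)) ht
    linarith [le_max_left (1 - t * (dmin * lam)) (t * (dmax * lam1) - 1),
      le_max_right (1 - t * (dmin * lam)) (t * (dmax * lam1) - 1)]
  rw [sub_mulVec, one_mulVec, smul_mulVec, dotProduct_sub, dotProduct_smul, smul_eq_mul]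
  exact abs_sub_mul_le_max_mul ht (Finset.sum_nonneg fun i _ => mul_self_nonneg (y i))
    (mul_dotProduct_self_le_dotProduct_laplacian_mulVec hsym hδ hδ0 hL hdmin_lb hdmin0 hlam0
      hlam_lb hy)
    (dotProduct_laplacian_mulVec_le hδ0 hL hdmax_ub (hlam0.trans hlam_le) hlam1_ub y)

/-- For the matrix `P = I − (1/(δ_max+1))(D − A)` of a connected
graph, `σ₂(P) ≤ max{ 1 − (δ_min/(δ_max+1)) λ_{n−1}(L), (δ_max/(δ_max+1)) λ₁(L) − 1 }`,
where `λ₁(L)` is the largest and `λ_{n−1}(L)` the second smallest eigenvalue of the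
normalized Laplacian `L = I − D^{−1/2} A D^{−1/2}` (whose smallest eigenvalue,
with eigenvector `D^{1/2}𝟙`, is `λ_n(L) = 0`).  The eigenvalues `λ₁(L)` and
`λ_{n−1}(L)` are characterized variationally. -/
theorem sigma2_le_laplacian_bound {n : ℕ} (hn : 0 < n)
    (A : Matrix (Fin n) (Fin n) ℝ)
    (hsym : Aᵀ = A)
    (h01 : ∀ i j, A i j = 0 ∨ A i j = 1)
    (hdiag : ∀ i, A i i = 0)
    (δ : Fin n → ℝ) (hδ : ∀ i, δ i = ∑ j, A i j)
    (hδ_pos : ∀ i, 1 ≤ δ i)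
    (dmax : ℝ) (hdmax_ub : ∀ i, δ i ≤ dmax) (hdmax_mem : ∃ i, δ i = dmax)
    (dmin : ℝ) (hdmin_lb : ∀ i, dmin ≤ δ i) (hdmin_mem : ∃ i, δ i = dmin)
    (L : Matrix (Fin n) (Fin n) ℝ)
    (hL : ∀ i j, L i j =
      (if i = j then (1 : ℝ) else 0) - A i j / (Real.sqrt (δ i) * Real.sqrt (δ j)))
    -- λ₁(L): the largest eigenvalue of L, characterized variationally
    (lam1 : ℝ)
    (hlam1_ub : ∀ x : Fin n → ℝ, (∑ i, x i * (L.mulVec x) i) ≤ lam1 * ∑ i, x i ^ 2)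
    (hlam1_ach : ∃ x : Fin n → ℝ, x ≠ 0 ∧ (∑ i, x i * (L.mulVec x) i) = lam1 * ∑ i, x i ^ 2)
    -- λ_{n−1}(L): the second smallest eigenvalue of L, characterized
    -- variationally over the orthogonal complement of D^{1/2}𝟙
    (lam : ℝ)
    (hlam_lb : ∀ x : Fin n → ℝ, (∑ i, x i * Real.sqrt (δ i)) = 0 →
      lam * (∑ i, x i ^ 2) ≤ ∑ i, x i * (L.mulVec x) i)
    (hlam_ach : ∃ x : Fin n → ℝ, x ≠ 0 ∧ (∑ i, x i * Real.sqrt (δ i)) = 0 ∧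
      (∑ i, x i * (L.mulVec x) i) = lam * ∑ i, x i ^ 2)
    (P : Matrix (Fin n) (Fin n) ℝ)
    (hP : P = 1 - (1 / (dmax + 1)) • (Matrix.diagonal δ - A)) :
    sigma2 P ≤ max (1 - dmin / (dmax + 1) * lam) (dmax / (dmax + 1) * lam1 - 1) :=
  sigma2_le_laplacian_bound_general A hsym h01 δ hδ hδ_pos dmax hdmax_ub dmin hdmin_lb hdmin_mem L
    hL lam1 hlam1_ub lam hlam_lb hlam_ach P hP
end

section
/- Let {P(t)} be i.i.d. random symmetric doubly stochastic n×n matrices, u(0) ∈ ℝ^n a probability vector, and u(t+1) = P(t) u(t). Then for any ε > 0 and t ≥ 1, ℙ[ ‖u(t) − 𝟙/n‖₂ / ‖u(0)‖₂ ≥ ε ] ≤ ε^{−2} λ₂(𝔼[P(t)ᵀ P(t)])^t, where λ₂ denotes the second largest eigenvalue. -/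
open Matrix MeasureTheory ProbabilityTheory

instance {m k : ℕ} : MeasurableSpace (Matrix (Fin m) (Fin k) ℝ) :=
  inferInstanceAs (MeasurableSpace (Fin m → Fin k → ℝ))

/-- The second largest eigenvalue of a symmetric doubly stochastic matrix,
via the variational characterization over the orthogonal complement of 𝟙. -/
noncomputable def lam2 {n : ℕ} (P : Matrix (Fin n) (Fin n) ℝ) : ℝ :=
  sSup {r | ∃ x : Fin n → ℝ, (∑ i, x i) = 0 ∧ l2norm x = 1 ∧
    r = ∑ i, x i * (P.mulVec x) i}

/-!
Write `v t = u t - 𝟙/n`. Since `P t 𝟙 = 𝟙` we have `v (t+1) = P t v t`, and since `𝟙ᵀ P t = 𝟙ᵀ`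
every `v t` stays in `𝟙ᗮ`, where `lam2` bounds the Rayleigh quotient. The vector `v t` is a
measurable function of `P 0, …, P (t-1)`, hence independent of `P t`, so
`𝔼‖v (t+1)‖² = 𝔼[v tᵀ (P tᵀ P t) v t] = 𝔼[v tᵀ M v t] ≤ λ₂(M) 𝔼‖v t‖²`; here `M` is positive
semidefinite, which also makes `λ₂(M) ≥ 0`. Iterating and using `‖v 0‖ ≤ ‖u 0‖` gives
`𝔼‖v t‖² ≤ λ₂(M)ᵗ ‖u 0‖²`, and Markov's inequality for `‖v t‖²` concludes. Integrability is
automatic because each `u t` stays in the standard simplex.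
-/

open Finset

instance {m k : ℕ} : BorelSpace (Matrix (Fin m) (Fin k) ℝ) :=
  inferInstanceAs (BorelSpace (Fin m → Fin k → ℝ))

section Algebra

variable {ι R : Type*} [Fintype ι]

lemma dotProduct_mulVec_eq_sum [CommSemiring R] (M : Matrix ι ι R) (x : ι → R) :
    x ⬝ᵥ (M *ᵥ x) = ∑ j, ∑ k, x j * x k * M j k := by
  simp only [dotProduct, mulVec, mul_sum]
  exact sum_congr rfl fun j _ => sum_congr rfl fun k _ => by ring

lemma dotProduct_transpose_mul_mulVec [CommSemiring R] (A : Matrix ι ι R) (x : ι → R) :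
    x ⬝ᵥ ((Aᵀ * A) *ᵥ x) = (A *ᵥ x) ⬝ᵥ (A *ᵥ x) := by
  rw [← mulVec_mulVec, dotProduct_mulVec, vecMul_transpose]

lemma dotProduct_self_nonneg [CommRing R] [LinearOrder R] [IsStrictOrderedRing R] (x : ι → R) :
    0 ≤ x ⬝ᵥ x :=
  sum_nonneg fun i _ => mul_self_nonneg (x i)

lemma dotProduct_self_le_of_sum_eq_zero [CommRing R] [LinearOrder R] [IsStrictOrderedRing R]
    {w : ι → R} (hw : ∑ i, w i = 0) (c : R) :
    w ⬝ᵥ w ≤ (w + fun _ => c) ⬝ᵥ (w + fun _ => c) := by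
  simp only [dotProduct, Pi.add_apply, add_mul, mul_add, sum_add_distrib, ← sum_mul, ← mul_sum,
    hw, mul_zero, zero_mul, add_zero, zero_add, le_add_iff_nonneg_right]
  rw [sum_const, smul_mul_assoc]
  exact nsmul_nonneg (mul_self_nonneg c) _

variable [CommRing R] [PartialOrder R] [IsOrderedRing R] [DecidableEq ι] {M : Matrix ι ι R}

lemma mulVec_mem_stdSimplex (hM : M ∈ colStochastic R ι) {x : ι → R}
    (hx : x ∈ stdSimplex R ι) : M *ᵥ x ∈ stdSimplex R ι :=
  ⟨nonneg_mulVec_of_mem_colStochastic hM hx.1, (sum_mulVec_of_mem_colStochastic hM).trans hx.2⟩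

lemma mulVec_sub_const (hM : M ∈ rowStochastic R ι) (x : ι → R) (c : R) :
    M *ᵥ (x - fun _ => c) = M *ᵥ x - fun _ => c := by
  have hc : (fun _ => c : ι → R) = c • 1 := by ext; simp
  rw [mulVec_sub, hc, mulVec_smul, one_vecMul_of_mem_rowStochastic hM]

lemma mem_stdSimplex_of_mulVec_recursion {Ω : Type*} {P : ℕ → Ω → Matrix ι ι R}
    {u : ℕ → Ω → ι → R} {u₀ : ι → R} (hP : ∀ t ω, P t ω ∈ colStochastic R ι)
    (hu₀ : u₀ ∈ stdSimplex R ι) (hu0 : ∀ ω, u 0 ω = u₀)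
    (hu : ∀ t ω, u (t + 1) ω = P t ω *ᵥ u t ω) (t : ℕ) (ω : Ω) : u t ω ∈ stdSimplex R ι := by
  induction t generalizing ω with
  | zero => exact hu0 ω ▸ hu₀
  | succ t ih => exact hu t ω ▸ mulVec_mem_stdSimplex (hP t ω) (ih ω)

end Algebra

section FinVectors

variable {n : ℕ}

lemma sum_sub_const_eq_zero_of_sum_eq_one {x : Fin n → ℝ} (hx : ∑ i, x i = 1) :
    ∑ i, (x - fun _ => (1 : ℝ) / n : Fin n → ℝ) i = 0 := by
  rcases n with _ | n
  · simp
  · simp [sum_sub_distrib, hx, mul_inv_cancel₀ (Nat.cast_add_one_ne_zero (R := ℝ) n)]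

lemma dotProduct_self_sub_const_le {x : Fin n → ℝ} (hx : ∑ i, x i = 1) :
    (x - fun _ => (1 : ℝ) / n) ⬝ᵥ (x - fun _ => (1 : ℝ) / n) ≤ x ⬝ᵥ x := by
  simpa using
    dotProduct_self_le_of_sum_eq_zero (sum_sub_const_eq_zero_of_sum_eq_one hx) ((1 : ℝ) / n)

lemma l2norm_eq_sqrt_dotProduct (x : Fin n → ℝ) : l2norm x = √(x ⬝ᵥ x) := by
  simp only [l2norm, dotProduct, sq]

lemma l2norm_sq (x : Fin n → ℝ) : l2norm x ^ 2 = x ⬝ᵥ x := by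
  rw [l2norm_eq_sqrt_dotProduct, Real.sq_sqrt (dotProduct_self_nonneg x)]

lemma l2norm_smul (c : ℝ) (x : Fin n → ℝ) : l2norm (c • x) = |c| * l2norm x := by
  rw [l2norm_eq_sqrt_dotProduct, l2norm_eq_sqrt_dotProduct, dotProduct_smul, smul_dotProduct,
    smul_eq_mul, smul_eq_mul, ← mul_assoc, Real.sqrt_mul' _ (dotProduct_self_nonneg x),
    ← sq, Real.sqrt_sq_eq_abs]

lemma l2norm_pos {x : Fin n → ℝ} (hx : x ≠ 0) : 0 < l2norm x := by
  rw [l2norm_eq_sqrt_dotProduct, Real.sqrt_pos]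
  exact (dotProduct_self_nonneg x).lt_of_ne' (dotProduct_self_eq_zero.not.2 hx)

lemma measurable_uncurry_mulVec :
    Measurable (Function.uncurry fun (A : Matrix (Fin n) (Fin n) ℝ) (x : Fin n → ℝ) => A *ᵥ x) :=
  (continuous_fst.matrix_mulVec continuous_snd).measurable

lemma measurable_transpose_mul_self :
    Measurable (fun A : Matrix (Fin n) (Fin n) ℝ => Aᵀ * A) :=
  (continuous_id.matrix_transpose.matrix_mul continuous_id).measurable

end FinVectors

section Lam2

variable {n : ℕ}

lemma bddAbove_rayleigh_quotients (M : Matrix (Fin n) (Fin n) ℝ) :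
    BddAbove {r | ∃ x : Fin n → ℝ, (∑ i, x i) = 0 ∧ l2norm x = 1 ∧
      r = ∑ i, x i * (M.mulVec x) i} := by
  refine ((isCompact_closedBall (0 : Fin n → ℝ) 1).bddAbove_image
    (f := fun x => x ⬝ᵥ (M *ᵥ x)) (by fun_prop)).mono ?_
  rintro _ ⟨x, -, hx, rfl⟩
  refine ⟨x, ?_, rfl⟩
  rw [mem_closedBall_zero_iff, pi_norm_le_iff_of_nonneg zero_le_one]
  intro i
  rw [Real.norm_eq_abs, ← sq_le_one_iff_abs_le_one, ← one_pow 2, ← hx, l2norm_sq, dotProduct, sq]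
  exact single_le_sum (f := fun i => x i * x i) (fun i _ => mul_self_nonneg (x i)) (mem_univ i)

lemma dotProduct_mulVec_le_lam2_mul (M : Matrix (Fin n) (Fin n) ℝ) {x : Fin n → ℝ}
    (hx : ∑ i, x i = 0) : x ⬝ᵥ (M *ᵥ x) ≤ lam2 M * (x ⬝ᵥ x) := by
  rcases eq_or_ne x 0 with rfl | hx0
  · simp
  have hc := l2norm_pos hx0
  set c := l2norm x
  have hle : (c⁻¹ • x) ⬝ᵥ (M *ᵥ (c⁻¹ • x)) ≤ lam2 M := by
    refine le_csSup (bddAbove_rayleigh_quotients M) ⟨c⁻¹ • x, ?_, ?_, rfl⟩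
    · simp [← mul_sum, hx]
    · rw [l2norm_smul, abs_inv, abs_of_pos hc, inv_mul_cancel₀ hc.ne']
  rw [mulVec_smul, dotProduct_smul, smul_dotProduct, smul_eq_mul, smul_eq_mul] at hle
  calc x ⬝ᵥ (M *ᵥ x) = c ^ 2 * (c⁻¹ * (c⁻¹ * x ⬝ᵥ (M *ᵥ x))) := by field_simp
    _ ≤ c ^ 2 * lam2 M := by gcongr
    _ = lam2 M * (x ⬝ᵥ x) := by rw [l2norm_sq, mul_comm]

lemma lam2_nonneg {M : Matrix (Fin n) (Fin n) ℝ} (hM : ∀ x, 0 ≤ x ⬝ᵥ (M *ᵥ x)) :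
    0 ≤ lam2 M :=
  Real.sSup_nonneg (by rintro _ ⟨x, -, -, rfl⟩; exact hM x)

end Lam2

section QuadraticForms

variable {Ω : Type*} {mΩ : MeasurableSpace Ω} {μ : Measure Ω} {n : ℕ}

lemma integrable_dotProduct_self {X : Ω → Fin n → ℝ}
    (hX : ∀ i, Integrable (fun ω => X ω i * X ω i) μ) :
    Integrable (fun ω => X ω ⬝ᵥ X ω) μ :=
  integrable_finsetSum _ fun i _ => hX i

lemma integrable_mul_apply_of_norm_le [IsFiniteMeasure μ] {X : Ω → Fin n → ℝ}
    (hX : Measurable X) {C : ℝ} (hC : ∀ ω, ‖X ω‖ ≤ C) (j k : Fin n) :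
    Integrable (fun ω => X ω j * X ω k) μ := by
  refine .of_bound (by fun_prop) (C * C) (ae_of_all _ fun ω => ?_)
  rw [norm_mul]
  exact mul_le_mul ((norm_le_pi_norm _ j).trans (hC ω)) ((norm_le_pi_norm _ k).trans (hC ω))
    (norm_nonneg _) ((norm_nonneg _).trans (hC ω))

lemma integrable_mul_apply_sub_of_mem_stdSimplex [IsFiniteMeasure μ] {Y : Ω → Fin n → ℝ}
    (hY : Measurable Y) (hYs : ∀ ω, Y ω ∈ stdSimplex ℝ (Fin n)) (c : Fin n → ℝ) (j k : Fin n) :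
    Integrable (fun ω => (Y ω - c) j * (Y ω - c) k) μ :=
  integrable_mul_apply_of_norm_le (hY.sub_const c) (fun ω => (norm_sub_le _ _).trans
    (add_le_add_left (mem_closedBall_zero_iff.1 (stdSimplex_subset_closedBall (hYs ω))) _)) j k

lemma ProbabilityTheory.IdentDistrib.transpose_mul_self_apply {ν : Measure Ω}
    {A B : Ω → Matrix (Fin n) (Fin n) ℝ} (h : IdentDistrib A B μ ν) (i j : Fin n) :
    IdentDistrib (fun ω => ((A ω)ᵀ * A ω) i j) (fun ω => ((B ω)ᵀ * B ω) i j) μ ν :=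
  h.comp ((measurable_pi_apply j).comp ((measurable_pi_apply i).comp measurable_transpose_mul_self))

lemma integral_dotProduct_mulVec_eq_sum {X : Ω → Fin n → ℝ}
    {B : Ω → Matrix (Fin n) (Fin n) ℝ}
    (h : ∀ j k, Integrable (fun ω => X ω j * X ω k * B ω j k) μ) :
    ∫ ω, X ω ⬝ᵥ (B ω *ᵥ X ω) ∂μ = ∑ j, ∑ k, ∫ ω, X ω j * X ω k * B ω j k ∂μ := by
  simp_rw [dotProduct_mulVec_eq_sum]
  rw [integral_finsetSum _ fun j _ => integrable_finsetSum _ fun k _ => h j k]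
  exact sum_congr rfl fun j _ => integral_finsetSum _ fun k _ => h j k

theorem integral_dotProduct_mulVec_of_indepFun {X : Ω → Fin n → ℝ}
    {B : Ω → Matrix (Fin n) (Fin n) ℝ} {M : Matrix (Fin n) (Fin n) ℝ} (hXB : IndepFun X B μ)
    (hX : ∀ j k, Integrable (fun ω => X ω j * X ω k) μ)
    (hB : ∀ j k, Integrable (fun ω => B ω j k) μ) (hM : ∀ j k, ∫ ω, B ω j k ∂μ = M j k) :
    ∫ ω, X ω ⬝ᵥ (B ω *ᵥ X ω) ∂μ = ∫ ω, X ω ⬝ᵥ (M *ᵥ X ω) ∂μ := by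
  have hindep : ∀ j k, IndepFun (fun ω => X ω j * X ω k) (fun ω => B ω j k) μ := fun j k =>
    hXB.comp (φ := fun x : Fin n → ℝ => x j * x k)
      (ψ := fun A : Matrix (Fin n) (Fin n) ℝ => A j k) (by fun_prop) (by fun_prop)
  rw [integral_dotProduct_mulVec_eq_sum fun j k => (hindep j k).integrable_mul (hX j k) (hB j k),
    integral_dotProduct_mulVec_eq_sum fun j k => (hX j k).mul_const (M j k)]
  refine sum_congr rfl fun j _ => sum_congr rfl fun k _ => ?_
  rw [(hindep j k).integral_fun_mul_eq_mul_integral (hX j k).1 (hB j k).1, integral_mul_const, hM]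

variable [IsProbabilityMeasure μ] {A : Ω → Matrix (Fin n) (Fin n) ℝ}
  {M : Matrix (Fin n) (Fin n) ℝ}

lemma dotProduct_mulVec_nonneg_of_integral_eq
    (hA : ∀ j k, Integrable (fun ω => ((A ω)ᵀ * A ω) j k) μ)
    (hM : ∀ j k, ∫ ω, ((A ω)ᵀ * A ω) j k ∂μ = M j k) (x : Fin n → ℝ) :
    0 ≤ x ⬝ᵥ (M *ᵥ x) := by
  have h := integral_dotProduct_mulVec_of_indepFun (indepFun_const_left x _)
    (fun j k => integrable_const _) hA hM
  rw [integral_const, probReal_univ, one_smul] at h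
  rw [← h]
  exact integral_nonneg fun ω => by
    rw [dotProduct_transpose_mul_mulVec]
    exact dotProduct_self_nonneg _

theorem integral_mulVec_dotProduct_le_lam2_mul {X : Ω → Fin n → ℝ} (hXA : IndepFun X A μ)
    (hX : ∀ j k, Integrable (fun ω => X ω j * X ω k) μ) (hXsum : ∀ ω, ∑ i, X ω i = 0)
    (hA : ∀ j k, Integrable (fun ω => ((A ω)ᵀ * A ω) j k) μ)
    (hM : ∀ j k, ∫ ω, ((A ω)ᵀ * A ω) j k ∂μ = M j k) :
    ∫ ω, (A ω *ᵥ X ω) ⬝ᵥ (A ω *ᵥ X ω) ∂μ ≤ lam2 M * ∫ ω, X ω ⬝ᵥ X ω ∂μ := by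
  calc ∫ ω, (A ω *ᵥ X ω) ⬝ᵥ (A ω *ᵥ X ω) ∂μ
      = ∫ ω, X ω ⬝ᵥ (((A ω)ᵀ * A ω) *ᵥ X ω) ∂μ := by
        simp_rw [dotProduct_transpose_mul_mulVec]
    _ = ∫ ω, X ω ⬝ᵥ (M *ᵥ X ω) ∂μ :=
        integral_dotProduct_mulVec_of_indepFun
          (hXA.comp measurable_id measurable_transpose_mul_self) hX hA hM
    _ ≤ ∫ ω, lam2 M * (X ω ⬝ᵥ X ω) ∂μ :=
        integral_mono_of_nonneg
          (ae_of_all _ fun ω => dotProduct_mulVec_nonneg_of_integral_eq hA hM _)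
          ((integrable_dotProduct_self fun i => hX i i).const_mul _)
          (ae_of_all _ fun ω => dotProduct_mulVec_le_lam2_mul M (hXsum ω))
    _ = lam2 M * ∫ ω, X ω ⬝ᵥ X ω ∂μ := integral_const_mul _ _

theorem integral_dotProduct_self_le_lam2_pow_mul {X : ℕ → Ω → Fin n → ℝ}
    {A : ℕ → Ω → Matrix (Fin n) (Fin n) ℝ} (hXA : ∀ s, IndepFun (X s) (A s) μ)
    (hX : ∀ s j k, Integrable (fun ω => X s ω j * X s ω k) μ)
    (hXsum : ∀ s ω, ∑ i, X s ω i = 0)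
    (hA : ∀ s j k, Integrable (fun ω => ((A s ω)ᵀ * A s ω) j k) μ)
    (hM : ∀ s j k, ∫ ω, ((A s ω)ᵀ * A s ω) j k ∂μ = M j k)
    (hrec : ∀ s ω, X (s + 1) ω = A s ω *ᵥ X s ω) (t : ℕ) :
    ∫ ω, X t ω ⬝ᵥ X t ω ∂μ ≤ lam2 M ^ t * ∫ ω, X 0 ω ⬝ᵥ X 0 ω ∂μ := by
  induction t with
  | zero => simp
  | succ s ih =>
    have hlam := lam2_nonneg (dotProduct_mulVec_nonneg_of_integral_eq (hA 0) (hM 0))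
    calc ∫ ω, X (s + 1) ω ⬝ᵥ X (s + 1) ω ∂μ
        = ∫ ω, (A s ω *ᵥ X s ω) ⬝ᵥ (A s ω *ᵥ X s ω) ∂μ := by simp_rw [hrec]
      _ ≤ lam2 M * ∫ ω, X s ω ⬝ᵥ X s ω ∂μ :=
          integral_mulVec_dotProduct_le_lam2_mul (hXA s) (hX s) (hXsum s) (hA s) (hM s)
      _ ≤ lam2 M * (lam2 M ^ s * ∫ ω, X 0 ω ⬝ᵥ X 0 ω ∂μ) := by gcongr
      _ = lam2 M ^ (s + 1) * ∫ ω, X 0 ω ⬝ᵥ X 0 ω ∂μ := by ring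

end QuadraticForms

section Recursion

variable {Ω β γ : Type*} {mΩ : MeasurableSpace Ω} {μ : Measure Ω} {mβ : MeasurableSpace β}
  [MeasurableSpace γ] {X : ℕ → Ω → β} {Y : ℕ → Ω → γ} {f : ℕ → β → γ → γ}

lemma measurable_iSup_comap_of_recursion (hf : ∀ s, Measurable (Function.uncurry (f s)))
    {y₀ : γ} (hY0 : ∀ ω, Y 0 ω = y₀) (hY : ∀ s ω, Y (s + 1) ω = f s (X s ω) (Y s ω)) (s : ℕ) :
    Measurable[⨆ i ∈ Set.Iio s, mβ.comap (X i)] (Y s) := by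
  induction s with
  | zero => simpa only [funext hY0] using measurable_const
  | succ s ih =>
    rw [funext (hY s)]
    refine (hf s).comp (Measurable.prodMk ?_ (ih.mono ?_ le_rfl))
    · exact Measurable.of_comap_le
        (le_iSup₂ (f := fun i (_ : i ∈ Set.Iio (s + 1)) => mβ.comap (X i)) s s.lt_succ_self)
    · exact biSup_mono fun i hi => hi.trans s.lt_succ_self

lemma measurable_of_recursion (hX : ∀ s, Measurable (X s))
    (hf : ∀ s, Measurable (Function.uncurry (f s))) {y₀ : γ} (hY0 : ∀ ω, Y 0 ω = y₀)
    (hY : ∀ s ω, Y (s + 1) ω = f s (X s ω) (Y s ω)) (s : ℕ) : Measurable (Y s) :=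
  (measurable_iSup_comap_of_recursion hf hY0 hY s).mono
    (iSup₂_le fun i _ => (hX i).comap_le) le_rfl

theorem indepFun_of_recursion (hX : ∀ s, Measurable (X s)) (hindep : iIndepFun X μ)
    (hf : ∀ s, Measurable (Function.uncurry (f s))) {y₀ : γ} (hY0 : ∀ ω, Y 0 ω = y₀)
    (hY : ∀ s ω, Y (s + 1) ω = f s (X s ω) (Y s ω)) (s : ℕ) :
    IndepFun (Y s) (X s) μ := by
  have h := indep_iSup_of_disjoint (fun i => (hX i).comap_le) hindep.iIndep
    (Set.disjoint_singleton_right.2 (lt_irrefl s) : Disjoint (Set.Iio s) {s})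
  rw [IndepFun_iff_Indep]
  refine indep_of_indep_of_le_right (indep_of_indep_of_le_left h ?_) ?_
  · exact (measurable_iSup_comap_of_recursion hf hY0 hY s).comap_le
  · exact le_iSup₂ (f := fun i (_ : i ∈ ({s} : Set ℕ)) => mβ.comap (X i)) s rfl

end Recursion

lemma measureReal_le_l2norm_div_le {Ω : Type*} {mΩ : MeasurableSpace Ω} {μ : Measure Ω}
    [IsFiniteMeasure μ] {n : ℕ} {f : Ω → Fin n → ℝ} (hf : Integrable (fun ω => f ω ⬝ᵥ f ω) μ)
    {ε c : ℝ} (hε : 0 < ε) (hc : 0 < c) :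
    μ.real {ω | ε ≤ l2norm (f ω) / c} ≤ ε⁻¹ ^ 2 * ((∫ ω, f ω ⬝ᵥ f ω ∂μ) / c ^ 2) := by
  have hsub : {ω | ε ≤ l2norm (f ω) / c} ⊆ {ω | (ε * c) ^ 2 ≤ f ω ⬝ᵥ f ω} := fun ω hω => by
    rw [Set.mem_ofPred_eq, ← l2norm_sq]
    exact pow_le_pow_left₀ (by positivity) ((le_div_iff₀ hc).1 hω) 2
  have hmarkov := mul_meas_ge_le_integral_of_nonneg
    (ae_of_all μ fun ω => dotProduct_self_nonneg (f ω)) hf ((ε * c) ^ 2)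
  calc μ.real {ω | ε ≤ l2norm (f ω) / c} ≤ μ.real {ω | (ε * c) ^ 2 ≤ f ω ⬝ᵥ f ω} :=
        measureReal_mono hsub
    _ ≤ (∫ ω, f ω ⬝ᵥ f ω ∂μ) / (ε * c) ^ 2 := (le_div_iff₀' (by positivity)).2 hmarkov
    _ = ε⁻¹ ^ 2 * ((∫ ω, f ω ⬝ᵥ f ω ∂μ) / c ^ 2) := by field_simp

theorem random_mixing_probability_bound_general {n : ℕ}
    {Ω : Type*} [MeasurableSpace Ω] (μ : Measure Ω) [IsProbabilityMeasure μ]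
    (P : ℕ → Ω → Matrix (Fin n) (Fin n) ℝ)
    (hmeas : ∀ t, Measurable (P t))
    (hnonneg : ∀ t ω i j, 0 ≤ P t ω i j)
    (hrow : ∀ t ω i, ∑ j, P t ω i j = 1)
    (hcol : ∀ t ω j, ∑ i, P t ω i j = 1)
    (hindep : iIndepFun P μ)
    (hident : ∀ s t : ℕ, IdentDistrib (P s) (P t) μ μ)
    (hint : ∀ i j, Integrable (fun ω => ((P 0 ω)ᵀ * P 0 ω) i j) μ)
    (u0 : Fin n → ℝ) (hu0_nonneg : ∀ i, 0 ≤ u0 i) (hu0_sum : ∑ i, u0 i = 1)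
    (u : ℕ → Ω → Fin n → ℝ)
    (hu0 : ∀ ω, u 0 ω = u0)
    (husucc : ∀ t ω, u (t + 1) ω = (P t ω).mulVec (u t ω))
    (M : Matrix (Fin n) (Fin n) ℝ)
    (hM : ∀ i j, M i j = ∫ ω, ((P 0 ω)ᵀ * P 0 ω) i j ∂μ)
    (ε : ℝ) (hε : 0 < ε) (t : ℕ) :
    (μ {ω | ε ≤ l2norm (u t ω - fun _ => (1 : ℝ) / n) / l2norm u0}).toReal ≤
      ε⁻¹ ^ 2 * lam2 M ^ t := by
  have hu_mem := mem_stdSimplex_of_mulVec_recursion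
    (fun s ω => mem_colStochastic_iff_sum.2 ⟨hnonneg s ω, hcol s ω⟩) ⟨hu0_nonneg, hu0_sum⟩
    hu0 husucc
  have hu_meas := measurable_of_recursion hmeas (fun _ => measurable_uncurry_mulVec) hu0 husucc
  set X : ℕ → Ω → Fin n → ℝ := fun s ω => u s ω - fun _ => (1 : ℝ) / n with hX
  have hX_int : ∀ s j k, Integrable (fun ω => X s ω j * X s ω k) μ := fun s =>
    integrable_mul_apply_sub_of_mem_stdSimplex (hu_meas s) (hu_mem s) _
  have hQ_int : ∀ s i j, Integrable (fun ω => ((P s ω)ᵀ * P s ω) i j) μ := fun s i j =>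
    ((hident s 0).transpose_mul_self_apply i j).integrable_iff.2 (hint i j)
  have hQ_M : ∀ s i j, ∫ ω, ((P s ω)ᵀ * P s ω) i j ∂μ = M i j := fun s i j => by
    rw [((hident s 0).transpose_mul_self_apply i j).integral_eq, hM]
  have hdecay : ∫ ω, X t ω ⬝ᵥ X t ω ∂μ ≤ lam2 M ^ t * ∫ ω, X 0 ω ⬝ᵥ X 0 ω ∂μ :=
    integral_dotProduct_self_le_lam2_pow_mul (X := X) (A := P)
      (fun s => (indepFun_of_recursion hmeas hindep (fun _ => measurable_uncurry_mulVec) hu0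
        husucc s).comp (measurable_id.sub_const _) measurable_id)
      hX_int (fun s ω => sum_sub_const_eq_zero_of_sum_eq_one (hu_mem s ω).2) hQ_int hQ_M
      (fun s ω => by simp only [hX, husucc,
        mulVec_sub_const (mem_rowStochastic_iff_sum.2 ⟨hnonneg s ω, hrow s ω⟩)]) t
  have hX0 : ∫ ω, X 0 ω ⬝ᵥ X 0 ω ∂μ ≤ l2norm u0 ^ 2 := by
    simpa [hX, hu0, l2norm_sq] using dotProduct_self_sub_const_le hu0_sum
  have hlam := lam2_nonneg (dotProduct_mulVec_nonneg_of_integral_eq (hQ_int 0) (hQ_M 0))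
  have hu0_pos : 0 < l2norm u0 := l2norm_pos fun h => by simp [h] at hu0_sum
  calc (μ {ω | ε ≤ l2norm (u t ω - fun _ => (1 : ℝ) / n) / l2norm u0}).toReal
      ≤ ε⁻¹ ^ 2 * ((∫ ω, X t ω ⬝ᵥ X t ω ∂μ) / l2norm u0 ^ 2) :=
        measureReal_le_l2norm_div_le (integrable_dotProduct_self fun i => hX_int t i i) hε hu0_pos
    _ ≤ ε⁻¹ ^ 2 * (lam2 M ^ t * l2norm u0 ^ 2 / l2norm u0 ^ 2) := by
        gcongr
        exact hdecay.trans (by gcongr)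
    _ = ε⁻¹ ^ 2 * lam2 M ^ t := by field_simp

/-- For i.i.d. random symmetric doubly stochastic matrices `P(t)`,
a probability vector `u(0)` and `u(t+1) = P(t) u(t)`, for any `ε > 0` and `t ≥ 1`,
`ℙ[ ‖u(t) − 𝟙/n‖₂ / ‖u(0)‖₂ ≥ ε ] ≤ ε^{−2} λ₂(𝔼[P(t)ᵀP(t)])^t`. -/
theorem random_mixing_probability_bound {n : ℕ} (hn : 2 ≤ n)
    {Ω : Type*} [MeasurableSpace Ω] (μ : Measure Ω) [IsProbabilityMeasure μ]
    (P : ℕ → Ω → Matrix (Fin n) (Fin n) ℝ)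
    (hmeas : ∀ t, Measurable (P t))
    (hsym : ∀ t ω, (P t ω)ᵀ = P t ω)
    (hnonneg : ∀ t ω i j, 0 ≤ P t ω i j)
    (hrow : ∀ t ω i, ∑ j, P t ω i j = 1)
    (hcol : ∀ t ω j, ∑ i, P t ω i j = 1)
    (hindep : iIndepFun P μ)
    (hident : ∀ s t : ℕ, IdentDistrib (P s) (P t) μ μ)
    (hint : ∀ i j, Integrable (fun ω => ((P 0 ω)ᵀ * P 0 ω) i j) μ)
    (u0 : Fin n → ℝ) (hu0_nonneg : ∀ i, 0 ≤ u0 i) (hu0_sum : ∑ i, u0 i = 1)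
    (u : ℕ → Ω → Fin n → ℝ)
    (hu0 : ∀ ω, u 0 ω = u0)
    (husucc : ∀ t ω, u (t + 1) ω = (P t ω).mulVec (u t ω))
    (M : Matrix (Fin n) (Fin n) ℝ)
    (hM : ∀ i j, M i j = ∫ ω, ((P 0 ω)ᵀ * P 0 ω) i j ∂μ)
    (ε : ℝ) (hε : 0 < ε) (t : ℕ) (ht : 1 ≤ t) :
    (μ {ω | ε ≤ l2norm (u t ω - fun _ => (1 : ℝ) / n) / l2norm u0}).toReal ≤
      ε⁻¹ ^ 2 * lam2 M ^ t :=
  random_mixing_probability_bound_general μ P hmeas hnonneg hrow hcol hindep hident hint u0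
    hu0_nonneg hu0_sum u hu0 husucc M hM ε hε t
end

section
/- Let G be an undirected graph with Cheeger constant h_G = min_{S ⊆ V} |E(S, S^c)| / min{vol(S), vol(S^c)} and normalized Laplacian L with second smallest eigenvalue λ_{n−1}(L). Then 2 h_G ≥ λ_{n−1}(L) > h_G² / 2. -/
/-!
Write `x = D^{1/2} f`. Then the Rayleigh quotient of `L` at `x` is
`∑ᵢⱼ Aᵢⱼ (fᵢ - fⱼ)² / (2 ∑ᵢ δᵢ fᵢ²)` and `x ⟂ D^{1/2} 𝟙` becomes `∑ᵢ δᵢ fᵢ = 0`.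

For the upper bound, take an optimal cut `S` and test `f = vol Sᶜ` on `S`, `f = -vol S` on `Sᶜ`.

For the lower bound, shift `f` by a weighted median and split it into positive and negative
parts. This does not increase the quotient, and each part `g` lives on at most half of the
volume. The discrete coarea inequality applied to `g²`, together with Cauchy–Schwarz, gives
`h² ≤ α (2 - α)` for the quotient `α` of `g`. Hence `α ≥ h²/2 + h⁴/8`, a bound uniform in `f`
and strictly larger than `h²/2`.
-/

open Matrix Finset

theorem abs_sub_eq_abs_min_sub_min_add_abs_max_sub_max (x y c : ℝ) :
    |x - y| = |min x c - min y c| + |max (x - c) 0 - max (y - c) 0| := by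
  rcases le_total x c with hx | hx <;> rcases le_total y c with hy | hy <;>
    simp [hx, hy, sub_nonpos.2]
  · rw [abs_of_nonpos (by linarith), abs_of_nonpos (by linarith), abs_of_nonpos (by linarith)]
    ring
  · rw [abs_of_nonneg (by linarith), abs_of_nonneg (by linarith), abs_of_nonneg (by linarith)]
    ring

theorem sq_posPart_add_sq_negPart (a : ℝ) : a⁺ ^ 2 + a⁻ ^ 2 = a ^ 2 := by
  rcases le_total 0 a with ha | ha <;> simp [ha]

theorem sq_posPart_sub_add_sq_negPart_sub_le (a b : ℝ) :
    (a⁺ - b⁺) ^ 2 + (a⁻ - b⁻) ^ 2 ≤ (a - b) ^ 2 := by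
  rcases le_total 0 a with ha | ha <;> rcases le_total 0 b with hb | hb <;> simp [ha, hb] <;>
    nlinarith

theorem mul_le_of_sq_two_mul_mul_le_mul_sub {h D E : ℝ} (hD : 0 ≤ D) (hE : 0 ≤ E)
    (hsq : (2 * h * D) ^ 2 ≤ E * (4 * D - E)) : (h ^ 2 + h ^ 4 / 4) * D ≤ E := by
  rcases hD.eq_or_lt with rfl | hD
  · simpa using hE
  have h1 : h ^ 2 * D ≤ E := le_of_mul_le_mul_left (by nlinarith) (by positivity : 0 < 4 * D)
  have h2 : (h ^ 2 * D) ^ 2 ≤ E ^ 2 := pow_le_pow_left₀ (by positivity) h1 2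
  exact le_of_mul_le_mul_left (by nlinarith) (by positivity : 0 < 4 * D)

namespace Cheeger

section Volume

variable {ι : Type*} {δ : ι → ℝ}

def vol (δ : ι → ℝ) (S : Finset ι) : ℝ := ∑ i ∈ S, δ i

theorem vol_mono (hδ : 0 ≤ δ) : Monotone (vol δ) :=
  fun _ _ hST => sum_le_sum_of_subset_of_nonneg hST fun i _ _ => hδ i

theorem vol_pos (hδ : ∀ i, 0 < δ i) {S : Finset ι} (hS : S.Nonempty) : 0 < vol δ S :=
  sum_pos (fun i _ => hδ i) hS

end Volume

section Energy

variable {ι : Type*} [Fintype ι] {A : Matrix ι ι ℝ} {δ : ι → ℝ}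

def dirichletEnergy (A : Matrix ι ι ℝ) (f : ι → ℝ) : ℝ := ∑ i, ∑ j, A i j * (f i - f j) ^ 2

theorem dirichletEnergy_nonneg (hAnn : ∀ i j, 0 ≤ A i j) (f : ι → ℝ) :
    0 ≤ dirichletEnergy A f :=
  sum_nonneg fun i _ => sum_nonneg fun j _ => mul_nonneg (hAnn i j) (sq_nonneg _)

theorem dirichletEnergy_sub_const (f : ι → ℝ) (m : ℝ) :
    dirichletEnergy A (fun i => f i - m) = dirichletEnergy A f := by
  simp only [dirichletEnergy, sub_sub_sub_cancel_right]

theorem dirichletEnergy_posPart_add_negPart_le (hAnn : ∀ i j, 0 ≤ A i j) (g : ι → ℝ) :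
    dirichletEnergy A g⁺ + dirichletEnergy A g⁻ ≤ dirichletEnergy A g := by
  simp only [dirichletEnergy, ← sum_add_distrib, ← mul_add]
  exact sum_le_sum fun i _ => sum_le_sum fun j _ =>
    mul_le_mul_of_nonneg_left (sq_posPart_sub_add_sq_negPart_sub_le (g i) (g j)) (hAnn i j)

theorem sum_sum_mul_sq_add_sq (hA : A.IsSymm) (hrow : ∀ i, ∑ j, A i j = δ i) (f : ι → ℝ) :
    ∑ i, ∑ j, A i j * (f i ^ 2 + f j ^ 2) = 2 * ∑ i, δ i * f i ^ 2 := by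
  have hleft : ∑ i, ∑ j, A i j * f i ^ 2 = ∑ i, δ i * f i ^ 2 :=
    sum_congr rfl fun i _ => by rw [← sum_mul, hrow]
  have hright : ∑ i, ∑ j, A i j * f j ^ 2 = ∑ i, δ i * f i ^ 2 := by
    rw [← hleft, sum_comm]
    exact sum_congr rfl fun i _ => sum_congr rfl fun j _ => by rw [hA.apply j i]
  simp only [mul_add, sum_add_distrib, hleft, hright]
  ring

theorem dirichletEnergy_eq (hA : A.IsSymm) (hrow : ∀ i, ∑ j, A i j = δ i) (f : ι → ℝ) :
    dirichletEnergy A f = 2 * (∑ i, δ i * f i ^ 2 - ∑ i, ∑ j, A i j * (f i * f j)) := by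
  have hexp : ∀ i j, A i j * (f i - f j) ^ 2
      = A i j * (f i ^ 2 + f j ^ 2) - 2 * (A i j * (f i * f j)) := fun i j => by ring
  simp only [dirichletEnergy, hexp, sum_sub_distrib, ← mul_sum, sum_sum_mul_sq_add_sq hA hrow]
  ring

theorem sum_sum_mul_add_sq (hA : A.IsSymm) (hrow : ∀ i, ∑ j, A i j = δ i) (f : ι → ℝ) :
    ∑ i, ∑ j, A i j * (f i + f j) ^ 2 = 4 * ∑ i, δ i * f i ^ 2 - dirichletEnergy A f := by
  have hexp : ∀ i j, A i j * (f i + f j) ^ 2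
      = 2 * (A i j * (f i ^ 2 + f j ^ 2)) - A i j * (f i - f j) ^ 2 := fun i j => by ring
  simp only [hexp, sum_sub_distrib, ← mul_sum, sum_sum_mul_sq_add_sq hA hrow, dirichletEnergy]
  ring

theorem sq_sum_sum_mul_abs_sub_sq_le (hA : A.IsSymm) (hAnn : ∀ i j, 0 ≤ A i j)
    (hrow : ∀ i, ∑ j, A i j = δ i) (g : ι → ℝ) :
    (∑ i, ∑ j, A i j * |g i ^ 2 - g j ^ 2|) ^ 2
      ≤ dirichletEnergy A g * (4 * ∑ i, δ i * g i ^ 2 - dirichletEnergy A g) := by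
  rw [← sum_sum_mul_add_sq hA hrow, dirichletEnergy]
  simp only [← Fintype.sum_prod_type']
  refine sum_sq_le_sum_mul_sum_of_sq_le_mul univ
    (fun p _ => mul_nonneg (hAnn _ _) (sq_nonneg _))
    (fun p _ => mul_nonneg (hAnn _ _) (sq_nonneg _)) fun p _ => le_of_eq ?_
  rw [mul_pow, sq_abs]
  ring

theorem sum_mul_sq_le_sum_mul_sub_sq (hδ : 0 ≤ δ) {f : ι → ℝ} (hf : ∑ i, δ i * f i = 0)
    (m : ℝ) : ∑ i, δ i * f i ^ 2 ≤ ∑ i, δ i * (f i - m) ^ 2 := by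
  have hexp : ∀ i, δ i * (f i - m) ^ 2 = δ i * f i ^ 2 - 2 * m * (δ i * f i) + m ^ 2 * δ i :=
    fun i => by ring
  simp only [hexp, sum_add_distrib, sum_sub_distrib, ← mul_sum, hf]
  nlinarith [sum_nonneg fun i (_ : i ∈ univ) => hδ i, sq_nonneg m]

end Energy

variable {ι : Type*} [Fintype ι] [DecidableEq ι] {A : Matrix ι ι ℝ} {δ : ι → ℝ}

def cut (A : Matrix ι ι ℝ) (S : Finset ι) : ℝ := ∑ i ∈ S, ∑ j ∈ Sᶜ, A i j

theorem cut_nonneg (hAnn : ∀ i j, 0 ≤ A i j) (S : Finset ι) : 0 ≤ cut A S :=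
  sum_nonneg fun i _ => sum_nonneg fun j _ => hAnn i j

theorem cut_compl (hA : A.IsSymm) (S : Finset ι) : cut A Sᶜ = cut A S := by
  rw [cut, cut, compl_compl]
  exact sum_comm.trans (sum_congr rfl fun i _ => sum_congr rfl fun j _ => hA.apply i j)

theorem vol_add_vol_compl (S : Finset ι) : vol δ S + vol δ Sᶜ = vol δ univ :=
  sum_add_sum_compl S δ

theorem sum_mul_ite_mem (φ : ℝ → ℝ) (S : Finset ι) (a b : ℝ) :
    ∑ i, δ i * φ (if i ∈ S then a else b) = φ a * vol δ S + φ b * vol δ Sᶜ := by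
  rw [← sum_add_sum_compl S, vol, vol, mul_sum, mul_sum]
  congr 1 <;> refine sum_congr rfl fun i hi => ?_
  · rw [if_pos hi, mul_comm]
  · rw [if_neg (mem_compl.1 hi), mul_comm]

theorem sum_sum_mul_ite_mem (hA : A.IsSymm) (F : ℝ → ℝ) (hF0 : F 0 = 0)
    (hFneg : ∀ t, F (-t) = F t) (S : Finset ι) (a b : ℝ) :
    ∑ i, ∑ j, A i j * F ((if i ∈ S then a else b) - if j ∈ S then a else b)
      = 2 * F (a - b) * cut A S := by
  have hba : F (b - a) = F (a - b) := by rw [← neg_sub, hFneg]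
  have hinner : ∀ i, ∑ j, A i j * F ((if i ∈ S then a else b) - if j ∈ S then a else b)
      = if i ∈ S then F (a - b) * ∑ j ∈ Sᶜ, A i j else F (a - b) * ∑ j ∈ S, A i j := by
    intro i
    rw [← sum_add_sum_compl S, mul_sum, mul_sum]
    split_ifs
    · rw [sum_eq_zero fun j _ => by simp [hF0], zero_add]
      exact sum_congr rfl fun j hj => by simp [mem_compl.1 hj, mul_comm]
    · rw [sum_eq_zero (s := Sᶜ) fun j hj => by simp [mem_compl.1 hj, hF0], add_zero]
      exact sum_congr rfl fun j _ => by simp [hba, mul_comm]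
  have hswap : ∑ i ∈ Sᶜ, ∑ j ∈ S, A i j = cut A S := by
    simpa only [cut, compl_compl] using cut_compl hA S
  rw [sum_congr rfl fun i _ => hinner i, ← sum_add_sum_compl S,
    sum_congr rfl fun i hi => if_pos hi, sum_congr rfl fun i hi => if_neg (mem_compl.1 hi),
    ← mul_sum, ← mul_sum, hswap, cut]
  ring

theorem dirichletEnergy_ite_mem (hA : A.IsSymm) (S : Finset ι) (a b : ℝ) :
    dirichletEnergy A (fun i => if i ∈ S then a else b) = 2 * (a - b) ^ 2 * cut A S :=
  sum_sum_mul_ite_mem hA (· ^ 2) (by norm_num) neg_sq S a b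

theorem exists_median [Nonempty ι] (hδ : 0 ≤ δ) (f : ι → ℝ) :
    ∃ m, 2 * vol δ {i | m < f i} ≤ vol δ univ ∧ 2 * vol δ {i | f i < m} ≤ vol δ univ := by
  have hvol : ∀ S, 0 ≤ vol δ S := fun S => sum_nonneg fun i _ => hδ i
  set T := (univ.image f).filter fun t => 2 * vol δ {i | t < f i} ≤ vol δ univ
  have hT : T.Nonempty := by
    obtain ⟨k, -, hk⟩ := univ.exists_max_image f univ_nonempty
    have hempty : ({i | f k < f i} : Finset ι) = ∅ := by
      ext i; simpa using hk i (mem_univ i)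
    refine ⟨f k, mem_filter.2 ⟨mem_image_of_mem f (mem_univ k), ?_⟩⟩
    rw [hempty, vol, sum_empty, mul_zero]
    exact hvol univ
  refine ⟨T.min' hT, (mem_filter.1 (T.min'_mem hT)).2, ?_⟩
  set m := T.min' hT
  rcases ({i | f i < m} : Finset ι).eq_empty_or_nonempty with hlow | hlow
  · rw [hlow, vol, sum_empty, mul_zero]
    exact hvol univ
  -- The largest value `f k` below `m` is not in `T`, and `{i | f k < f i} = {i | m ≤ f i}`.
  obtain ⟨k, hk, hkmax⟩ := exists_max_image _ f hlow
  have hkm : f k < m := (mem_filter.1 hk).2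
  have hkT : f k ∉ T := fun h => (T.min'_le _ h).not_gt hkm
  have hupper : ({i | f k < f i} : Finset ι) = ({i | f i < m} : Finset ι)ᶜ := by
    ext i
    simp only [mem_filter, mem_univ, true_and, mem_compl, not_lt]
    exact ⟨fun hi => le_of_not_gt fun him => (hkmax i (by simpa using him)).not_gt hi,
      fun hi => hkm.trans_le hi⟩
  simp only [T, mem_filter, mem_image_of_mem f (mem_univ k), true_and, not_le, hupper] at hkT
  linarith [vol_add_vol_compl (δ := δ) {i | f i < m}]

theorem sum_mul_eq_of_min_eq_ite {u : ι → ℝ} {c : ℝ} {P : Finset ι}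
    (hlayer : ∀ i, min (u i) c = if i ∈ P then c else 0) :
    ∑ i, δ i * u i = c * vol δ P + ∑ i, δ i * max (u i - c) 0 := by
  have hsplit : ∀ i, δ i * u i = δ i * min (u i) c + δ i * max (u i - c) 0 := fun i => by
    rcases le_total (u i) c with hi | hi
    · simp [hi]
    · simp [hi, mul_sub]
  simp only [hsplit, sum_add_distrib, hlayer, mul_ite, mul_zero, sum_ite_mem, univ_inter, vol,
    sum_mul, mul_comm c]

theorem sum_sum_mul_abs_sub_eq_of_min_eq_ite (hA : A.IsSymm) {u : ι → ℝ} {c : ℝ}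
    {P : Finset ι} (hc : 0 ≤ c) (hlayer : ∀ i, min (u i) c = if i ∈ P then c else 0) :
    ∑ i, ∑ j, A i j * |u i - u j|
      = 2 * c * cut A P + ∑ i, ∑ j, A i j * |max (u i - c) 0 - max (u j - c) 0| := by
  have hsplit : ∀ i j, A i j * |u i - u j| = A i j * |min (u i) c - min (u j) c|
      + A i j * |max (u i - c) 0 - max (u j - c) 0| := fun i j => by
    rw [abs_sub_eq_abs_min_sub_min_add_abs_max_sub_max _ _ c, mul_add]
  have hbottom := sum_sum_mul_ite_mem hA (|·|) abs_zero abs_neg P c 0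
  simp only [sub_zero, abs_of_nonneg hc] at hbottom
  simp only [hsplit, sum_add_distrib, hlayer, hbottom]

/-- Discrete coarea inequality. -/
theorem two_mul_mul_sum_le_sum_sum_mul_abs_sub (hA : A.IsSymm) (h : ℝ) {u : ι → ℝ} (hu : 0 ≤ u)
    (hcut : ∀ S : Finset ι, S.Nonempty → (∀ i ∈ S, 0 < u i) → h * vol δ S ≤ cut A S) :
    2 * h * ∑ i, δ i * u i ≤ ∑ i, ∑ j, A i j * |u i - u j| := by
  induction hP : ({i | 0 < u i} : Finset ι) using Finset.strongInduction generalizing u with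
  | H P ih =>
  rcases P.eq_empty_or_nonempty with rfl | hPne
  · have hu0 : ∀ i, u i = 0 := fun i =>
      (hu i).antisymm' (not_lt.1 fun hi => notMem_empty i (hP ▸ mem_filter.2 ⟨mem_univ i, hi⟩))
    simp [hu0]
  -- Peel off the bottom layer `min u c = c • 𝟙_P`, `c` being the least positive value of `u`.
  obtain ⟨i₀, hi₀, hmin⟩ := P.exists_min_image u hPne
  set c := u i₀
  have hPpos : ∀ i, i ∈ P ↔ 0 < u i := fun i => by simp [← hP]
  have hc : 0 < c := (hPpos i₀).1 hi₀
  have hlayer : ∀ i, min (u i) c = if i ∈ P then c else 0 := by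
    intro i
    split_ifs with hi
    · exact min_eq_right (hmin i hi)
    · rw [(hu i).antisymm' (not_lt.1 ((hPpos i).not.1 hi))]
      exact min_eq_left hc.le
  set u' : ι → ℝ := fun i => max (u i - c) 0
  have hpos_of_pos' : ∀ i, 0 < u' i → 0 < u i := fun i hi =>
    hc.trans (sub_pos.1 ((lt_max_iff.1 hi).resolve_right (lt_irrefl 0)))
  have hsub : ({i | 0 < u' i} : Finset ι) ⊂ P :=
    (ssubset_iff_of_subset fun i hi => (hPpos i).2 (hpos_of_pos' i (by simpa using hi))).2
      ⟨i₀, hi₀, by simp [u', c]⟩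
  have ih' := ih _ hsub (u := u') (fun i => le_max_right _ _)
    (fun S hS hSpos => hcut S hS fun i hi => hpos_of_pos' i (hSpos i hi)) rfl
  rw [sum_mul_eq_of_min_eq_ite hlayer, sum_sum_mul_abs_sub_eq_of_min_eq_ite hA hc.le hlayer]
  nlinarith [hcut P hPne fun i => (hPpos i).1]

theorem mul_sum_le_dirichletEnergy_of_nonneg (hA : A.IsSymm) (hAnn : ∀ i j, 0 ≤ A i j)
    (hrow : ∀ i, ∑ j, A i j = δ i) (hδ : 0 ≤ δ) {h : ℝ} (hh : 0 ≤ h)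
    (hcut : ∀ S : Finset ι, S.Nonempty → 2 * vol δ S ≤ vol δ univ → h * vol δ S ≤ cut A S)
    {g : ι → ℝ} (hg : 0 ≤ g) (hsupp : 2 * vol δ {i | 0 < g i} ≤ vol δ univ) :
    (h ^ 2 + h ^ 4 / 4) * ∑ i, δ i * g i ^ 2 ≤ dirichletEnergy A g := by
  set D := ∑ i, δ i * g i ^ 2
  set E := dirichletEnergy A g
  have hcoarea : 2 * h * D ≤ ∑ i, ∑ j, A i j * |g i ^ 2 - g j ^ 2| :=
    two_mul_mul_sum_le_sum_sum_mul_abs_sub hA h (u := fun i => g i ^ 2) (fun i => sq_nonneg _)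
      fun S hS hSpos => hcut S hS <| by
        refine le_trans ?_ hsupp
        gcongr
        refine vol_mono hδ fun i hi => mem_filter.2 ⟨mem_univ i, (hg i).lt_of_ne fun h0 => ?_⟩
        simpa [← h0] using hSpos i hi
  have hD : 0 ≤ D := sum_nonneg fun i _ => mul_nonneg (hδ i) (sq_nonneg _)
  have hsq : (2 * h * D) ^ 2 ≤ E * (4 * D - E) :=
    (pow_le_pow_left₀ (by positivity) hcoarea 2).trans (sq_sum_sum_mul_abs_sub_sq_le hA hAnn hrow g)
  exact mul_le_of_sq_two_mul_mul_le_mul_sub hD (dirichletEnergy_nonneg hAnn g) hsq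

theorem mul_sum_le_dirichletEnergy [Nonempty ι] (hA : A.IsSymm) (hAnn : ∀ i j, 0 ≤ A i j)
    (hrow : ∀ i, ∑ j, A i j = δ i) (hδ : 0 ≤ δ) {h : ℝ} (hh : 0 ≤ h)
    (hcut : ∀ S : Finset ι, S.Nonempty → 2 * vol δ S ≤ vol δ univ → h * vol δ S ≤ cut A S)
    {f : ι → ℝ} (hf : ∑ i, δ i * f i = 0) :
    (h ^ 2 + h ^ 4 / 4) * ∑ i, δ i * f i ^ 2 ≤ dirichletEnergy A f := by
  obtain ⟨m, hup, hdown⟩ := exists_median hδ f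
  set g : ι → ℝ := fun i => f i - m
  have hpos := mul_sum_le_dirichletEnergy_of_nonneg hA hAnn hrow hδ hh hcut (g := g⁺)
    (posPart_nonneg g) (by simpa [g] using hup)
  have hneg := mul_sum_le_dirichletEnergy_of_nonneg hA hAnn hrow hδ hh hcut (g := g⁻)
    (negPart_nonneg g) (by simpa [g] using hdown)
  have hsplit : ∑ i, δ i * g i ^ 2 = ∑ i, δ i * g⁺ i ^ 2 + ∑ i, δ i * g⁻ i ^ 2 := by
    simp only [← sum_add_distrib, ← mul_add, Pi.posPart_apply, Pi.negPart_apply,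
      sq_posPart_add_sq_negPart]
  calc (h ^ 2 + h ^ 4 / 4) * ∑ i, δ i * f i ^ 2
      ≤ (h ^ 2 + h ^ 4 / 4) * ∑ i, δ i * g i ^ 2 :=
        mul_le_mul_of_nonneg_left (sum_mul_sq_le_sum_mul_sub_sq hδ hf m) (by positivity)
    _ ≤ dirichletEnergy A g⁺ + dirichletEnergy A g⁻ := by rw [hsplit, mul_add]; linarith
    _ ≤ dirichletEnergy A g := dirichletEnergy_posPart_add_negPart_le hAnn g
    _ = dirichletEnergy A f := dirichletEnergy_sub_const f m

noncomputable def cheegerRatio (A : Matrix ι ι ℝ) (δ : ι → ℝ) (S : Finset ι) : ℝ :=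
  cut A S / min (vol δ S) (vol δ Sᶜ)

def cheegerRatios (A : Matrix ι ι ℝ) (δ : ι → ℝ) : Set ℝ :=
  {r | ∃ S : Finset ι, S.Nonempty ∧ Sᶜ.Nonempty ∧ r = cheegerRatio A δ S}

noncomputable def cheegerConstant (A : Matrix ι ι ℝ) (δ : ι → ℝ) : ℝ := sInf (cheegerRatios A δ)

theorem finite_cheegerRatios : (cheegerRatios A δ).Finite :=
  (Set.finite_range (cheegerRatio A δ)).subset fun _ ⟨S, _, _, hr⟩ => ⟨S, hr.symm⟩

theorem cheegerConstant_le_cheegerRatio {S : Finset ι} (hS : S.Nonempty) (hSc : Sᶜ.Nonempty) :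
    cheegerConstant A δ ≤ cheegerRatio A δ S :=
  csInf_le finite_cheegerRatios.bddBelow ⟨S, hS, hSc, rfl⟩

theorem exists_cheegerConstant_eq [Nontrivial ι] :
    ∃ S : Finset ι, S.Nonempty ∧ Sᶜ.Nonempty ∧ cheegerConstant A δ = cheegerRatio A δ S := by
  obtain ⟨a, b, hab⟩ := exists_pair_ne ι
  exact Set.Nonempty.csInf_mem (s := cheegerRatios A δ)
    ⟨_, {a}, singleton_nonempty a, ⟨b, by simpa using hab.symm⟩, rfl⟩ finite_cheegerRatios

theorem cheegerConstant_pos [Nontrivial ι] (hδ : ∀ i, 0 < δ i)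
    (hcut : ∀ S : Finset ι, S.Nonempty → Sᶜ.Nonempty → 0 < cut A S) :
    0 < cheegerConstant A δ := by
  obtain ⟨S, hS, hSc, heq⟩ := exists_cheegerConstant_eq (A := A) (δ := δ)
  rw [heq]
  exact div_pos (hcut S hS hSc) (lt_min (vol_pos hδ hS) (vol_pos hδ hSc))

theorem cheegerConstant_mul_vol_le (hδ : ∀ i, 0 < δ i) {S : Finset ι} (hS : S.Nonempty)
    (hhalf : 2 * vol δ S ≤ vol δ univ) : cheegerConstant A δ * vol δ S ≤ cut A S := by
  have hS_pos := vol_pos hδ hS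
  have hsum := vol_add_vol_compl (δ := δ) S
  have hSc : Sᶜ.Nonempty := by
    refine nonempty_iff_ne_empty.2 fun hSc => ?_
    have : vol δ Sᶜ = 0 := by rw [hSc, vol, sum_empty]
    linarith
  have hle := cheegerConstant_le_cheegerRatio (A := A) (δ := δ) hS hSc
  rwa [cheegerRatio, min_eq_left (by linarith), le_div_iff₀ hS_pos] at hle

def dirichletQuotients (A : Matrix ι ι ℝ) (δ : ι → ℝ) : Set ℝ :=
  {r | ∃ f : ι → ℝ, f ≠ 0 ∧ ∑ i, δ i * f i = 0 ∧
    r = dirichletEnergy A f / (2 * ∑ i, δ i * f i ^ 2)}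

theorem exists_dirichletEnergy_div_le_two_mul_cheegerRatio (hA : A.IsSymm)
    (hAnn : ∀ i j, 0 ≤ A i j) (hδ : ∀ i, 0 < δ i) {S : Finset ι} (hS : S.Nonempty)
    (hSc : Sᶜ.Nonempty) :
    ∃ f : ι → ℝ, f ≠ 0 ∧ ∑ i, δ i * f i = 0 ∧
      dirichletEnergy A f / (2 * ∑ i, δ i * f i ^ 2) ≤ 2 * cheegerRatio A δ S := by
  have hp := vol_pos hδ hS
  have hq := vol_pos hδ hSc
  refine ⟨fun i => if i ∈ S then vol δ Sᶜ else -vol δ S, ?_, ?_, ?_⟩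
  · obtain ⟨i, hi⟩ := hS
    exact fun h0 => hq.ne' (by simpa [hi] using congrFun h0 i)
  · have hmean := sum_mul_ite_mem (δ := δ) id S (vol δ Sᶜ) (-vol δ S)
    simp only [id] at hmean
    rw [hmean]
    ring
  · have hnorm := sum_mul_ite_mem (δ := δ) (· ^ 2) S (vol δ Sᶜ) (-vol δ S)
    rw [hnorm, dirichletEnergy_ite_mem hA, cheegerRatio]
    set p := vol δ S
    set q := vol δ Sᶜ
    have hmin : min p q * (p + q) ≤ 2 * (p * q) := by
      nlinarith [min_le_left p q, min_le_right p q]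
    rw [div_le_iff₀ (by positivity), mul_div_assoc', div_mul_eq_mul_div,
      le_div_iff₀ (lt_min hp hq)]
    nlinarith [mul_le_mul_of_nonneg_left hmin (mul_nonneg (add_pos hp hq).le (cut_nonneg hAnn S))]

noncomputable def normalizedLaplacian (A : Matrix ι ι ℝ) (δ : ι → ℝ) : Matrix ι ι ℝ :=
  Matrix.of fun i j => (if i = j then 1 else 0) - A i j / (Real.sqrt (δ i) * Real.sqrt (δ j))

def rayleighQuotients (L : Matrix ι ι ℝ) (v : ι → ℝ) : Set ℝ :=
  {r | ∃ x : ι → ℝ, x ≠ 0 ∧ (∑ i, x i * v i) = 0 ∧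
    r = (∑ i, x i * (L.mulVec x) i) / ∑ i, x i ^ 2}

theorem sum_mul_normalizedLaplacian_mulVec (hA : A.IsSymm) (hrow : ∀ i, ∑ j, A i j = δ i)
    (hδ : ∀ i, 0 < δ i) (f : ι → ℝ) :
    ∑ i, Real.sqrt (δ i) * f i * (normalizedLaplacian A δ *ᵥ fun j => Real.sqrt (δ j) * f j) i
      = dirichletEnergy A f / 2 := by
  have hsqrt : ∀ i, Real.sqrt (δ i) ≠ 0 := fun i => (Real.sqrt_pos.2 (hδ i)).ne'
  have hterm : ∀ i,
      Real.sqrt (δ i) * f i * (normalizedLaplacian A δ *ᵥ fun j => Real.sqrt (δ j) * f j) i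
        = δ i * f i ^ 2 - ∑ j, A i j * (f i * f j) := by
    intro i
    simp only [mulVec, dotProduct, normalizedLaplacian, of_apply, sub_mul, sum_sub_distrib,
      ite_mul, one_mul, zero_mul, sum_ite_eq, mem_univ, if_true, mul_sub, mul_sum]
    congr 1
    · linear_combination f i ^ 2 * Real.mul_self_sqrt (hδ i).le
    · exact sum_congr rfl fun j _ => by field_simp [hsqrt i, hsqrt j]
  rw [sum_congr rfl fun i _ => hterm i, sum_sub_distrib, dirichletEnergy_eq hA hrow]
  ring

theorem rayleighQuotients_normalizedLaplacian (hA : A.IsSymm) (hrow : ∀ i, ∑ j, A i j = δ i)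
    (hδ : ∀ i, 0 < δ i) :
    rayleighQuotients (normalizedLaplacian A δ) (fun i => Real.sqrt (δ i)) =
      dirichletQuotients A δ := by
  have hsqrt : ∀ i, Real.sqrt (δ i) ≠ 0 := fun i => (Real.sqrt_pos.2 (hδ i)).ne'
  have hne : ∀ f : ι → ℝ, (fun i => Real.sqrt (δ i) * f i) ≠ 0 ↔ f ≠ 0 := fun f =>
    not_congr ⟨fun h => funext fun i => by simpa [hsqrt i] using congrFun h i,
      fun h => funext fun i => by simp [h]⟩
  have horth : ∀ f : ι → ℝ, ∑ i, Real.sqrt (δ i) * f i * Real.sqrt (δ i) = ∑ i, δ i * f i :=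
    fun f => sum_congr rfl fun i _ => by linear_combination f i * Real.mul_self_sqrt (hδ i).le
  have hnorm : ∀ f : ι → ℝ, ∑ i, (Real.sqrt (δ i) * f i) ^ 2 = ∑ i, δ i * f i ^ 2 :=
    fun f => sum_congr rfl fun i _ => by
      linear_combination f i ^ 2 * Real.mul_self_sqrt (hδ i).le
  ext r
  constructor
  · rintro ⟨x, hx, hxorth, rfl⟩
    have hxf : x = fun i => Real.sqrt (δ i) * (x i / Real.sqrt (δ i)) :=
      funext fun i => (mul_div_cancel₀ _ (hsqrt i)).symm
    rw [hxf] at hx hxorth ⊢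
    refine ⟨_, (hne _).1 hx, horth _ ▸ hxorth, ?_⟩
    rw [sum_mul_normalizedLaplacian_mulVec hA hrow hδ, hnorm]
    ring
  · rintro ⟨f, hf, hforth, rfl⟩
    refine ⟨_, (hne f).2 hf, (horth f).trans hforth, ?_⟩
    rw [sum_mul_normalizedLaplacian_mulVec hA hrow hδ, hnorm]
    ring

theorem sInf_rayleighQuotients_le_two_mul_cheegerConstant [Nontrivial ι] (hA : A.IsSymm)
    (hAnn : ∀ i j, 0 ≤ A i j) (hrow : ∀ i, ∑ j, A i j = δ i) (hδ : ∀ i, 0 < δ i) :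
    sInf (rayleighQuotients (normalizedLaplacian A δ) fun i => Real.sqrt (δ i))
      ≤ 2 * cheegerConstant A δ := by
  obtain ⟨S, hS, hSc, heq⟩ := exists_cheegerConstant_eq (A := A) (δ := δ)
  obtain ⟨f, hf, horth, hle⟩ :=
    exists_dirichletEnergy_div_le_two_mul_cheegerRatio hA hAnn hδ hS hSc
  rw [rayleighQuotients_normalizedLaplacian hA hrow hδ, heq]
  refine (csInf_le (s := dirichletQuotients A δ) ⟨0, ?_⟩ ⟨f, hf, horth, rfl⟩).trans hle
  rintro _ ⟨g, -, -, rfl⟩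
  exact div_nonneg (dirichletEnergy_nonneg hAnn g)
    (mul_nonneg zero_le_two (sum_nonneg fun i _ => mul_nonneg (hδ i).le (sq_nonneg _)))

theorem cheegerConstant_sq_div_two_lt_sInf_rayleighQuotients [Nontrivial ι] (hA : A.IsSymm)
    (hAnn : ∀ i j, 0 ≤ A i j) (hrow : ∀ i, ∑ j, A i j = δ i) (hδ : ∀ i, 0 < δ i)
    (hcut : ∀ S : Finset ι, S.Nonempty → Sᶜ.Nonempty → 0 < cut A S) :
    cheegerConstant A δ ^ 2 / 2
      < sInf (rayleighQuotients (normalizedLaplacian A δ) fun i => Real.sqrt (δ i)) := by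
  set h := cheegerConstant A δ
  have hh : 0 < h := cheegerConstant_pos hδ hcut
  obtain ⟨S, hS, hSc, -⟩ := exists_cheegerConstant_eq (A := A) (δ := δ)
  obtain ⟨f₀, hf₀, horth₀, -⟩ :=
    exists_dirichletEnergy_div_le_two_mul_cheegerRatio hA hAnn hδ hS hSc
  rw [rayleighQuotients_normalizedLaplacian hA hrow hδ]
  calc h ^ 2 / 2 < (h ^ 2 + h ^ 4 / 4) / 2 := by
        gcongr
        exact lt_add_of_pos_right _ (by positivity)
    _ ≤ sInf (dirichletQuotients A δ) := by
      refine le_csInf ⟨_, f₀, hf₀, horth₀, rfl⟩ ?_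
      rintro _ ⟨f, hf, horth, rfl⟩
      obtain ⟨i, hi⟩ := Function.ne_iff.1 hf
      have hD : 0 < ∑ i, δ i * f i ^ 2 :=
        sum_pos' (fun i _ => mul_nonneg (hδ i).le (sq_nonneg _))
          ⟨i, mem_univ i, mul_pos (hδ i) (sq_pos_of_ne_zero hi)⟩
      rw [le_div_iff₀ (by positivity)]
      have := mul_sum_le_dirichletEnergy hA hAnn hrow (fun i => (hδ i).le) hh.le
        (fun S hS hhalf => cheegerConstant_mul_vol_le hδ hS hhalf) horth
      linarith

end Cheeger

namespace SimpleGraph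

variable {V : Type*} (G : SimpleGraph V) [DecidableRel G.Adj]

theorem adjMatrix_nonneg {α : Type*} [Zero α] [One α] [Preorder α] [ZeroLEOneClass α]
    (i j : V) : 0 ≤ G.adjMatrix α i j := by
  rw [adjMatrix_apply]
  split_ifs
  exacts [zero_le_one, le_rfl]

theorem sum_adjMatrix_apply {α : Type*} [NonAssocSemiring α] [Fintype V] (i : V) :
    ∑ j, G.adjMatrix α i j = G.degree i := by
  simp [adjMatrix_apply, degree, neighborFinset_eq_filter]

variable {G}

theorem Connected.cut_adjMatrix_pos [Fintype V] [DecidableEq V] (hG : G.Connected)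
    {S : Finset V} (hS : S.Nonempty) (hSc : Sᶜ.Nonempty) : 0 < Cheeger.cut (G.adjMatrix ℝ) S := by
  obtain ⟨a, ha⟩ := hS
  obtain ⟨b, hb⟩ := hSc
  obtain ⟨d, -, hd₁, hd₂⟩ :=
    (hG.preconnected a b).some.exists_boundary_dart S ha (mem_compl.1 hb)
  refine sum_pos' (fun i _ => sum_nonneg fun j _ => G.adjMatrix_nonneg i j) ⟨d.fst, hd₁, ?_⟩
  refine sum_pos' (fun j _ => G.adjMatrix_nonneg _ j) ⟨d.snd, mem_compl.2 hd₂, ?_⟩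
  simp [d.adj]

end SimpleGraph

/-- Cheeger's inequality for the normalized Laplacian of a
connected graph: `2 h_G ≥ λ_{n−1}(L) > h_G² / 2`, where `h_G` is the Cheeger
constant and `λ_{n−1}(L)` the second smallest eigenvalue of `L`, characterized
variationally as the infimum of the Rayleigh quotient over the orthogonal
complement of `D^{1/2}𝟙`. -/
theorem cheeger_inequality {n : ℕ} (hn : 2 ≤ n)
    (G : SimpleGraph (Fin n)) [DecidableRel G.Adj] (hconn : G.Connected)
    (A : Matrix (Fin n) (Fin n) ℝ) (hA : A = G.adjMatrix ℝ)
    (δ : Fin n → ℝ) (hδ : ∀ i, δ i = (G.degree i : ℝ))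
    (L : Matrix (Fin n) (Fin n) ℝ)
    (hL : ∀ i j, L i j =
      (if i = j then (1 : ℝ) else 0) - A i j / (Real.sqrt (δ i) * Real.sqrt (δ j)))
    (hG : ℝ)
    (hhG : hG = sInf {r | ∃ S : Finset (Fin n), S.Nonempty ∧ Sᶜ.Nonempty ∧
      r = (∑ i ∈ S, ∑ j ∈ Sᶜ, A i j) / min (∑ i ∈ S, δ i) (∑ i ∈ Sᶜ, δ i)})
    (lam : ℝ)
    (hlam : lam = sInf {r | ∃ x : Fin n → ℝ, x ≠ 0 ∧
      (∑ i, x i * Real.sqrt (δ i)) = 0 ∧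
      r = (∑ i, x i * (L.mulVec x) i) / ∑ i, x i ^ 2}) :
    2 * hG ≥ lam ∧ lam > hG ^ 2 / 2 := by
  have : Nontrivial (Fin n) := Fin.nontrivial_iff_two_le.2 hn
  subst hA
  have hrow : ∀ i, ∑ j, G.adjMatrix ℝ i j = δ i := fun i =>
    (G.sum_adjMatrix_apply i).trans (hδ i).symm
  have hδpos : ∀ i, 0 < δ i := fun i =>
    (hδ i).symm ▸ Nat.cast_pos.2 (hconn.preconnected.degree_pos_of_nontrivial i)
  have hL' : L = Cheeger.normalizedLaplacian (G.adjMatrix ℝ) δ := Matrix.ext hL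
  -- `hG` and `lam` now unfold to `cheegerConstant` and `sInf (rayleighQuotients L √δ)`.
  subst hL' hhG hlam
  exact ⟨Cheeger.sInf_rayleighQuotients_le_two_mul_cheegerConstant G.isSymm_adjMatrix
      G.adjMatrix_nonneg hrow hδpos,
    Cheeger.cheegerConstant_sq_div_two_lt_sInf_rayleighQuotients G.isSymm_adjMatrix
      G.adjMatrix_nonneg hrow hδpos fun S hS hSc => hconn.cut_adjMatrix_pos hS hSc⟩
end

section
/- Let G be the k-connected path on n nodes with k ≤ √n. Then the second smallest eigenvalue of its normalized Laplacian satisfies λ_{n−1}(L) = Θ(k²/n²); in particular, the Cheeger constant of G satisfies h_G = Ω(k/n). -/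
open Matrix

/-- Adjacency matrix of the k-connected path on n nodes: nodes `i ≠ j` are
joined when they are at distance at most `k` along the path. -/
def pathAdj (n k : ℕ) : Matrix (Fin n) (Fin n) ℝ :=
  Matrix.of fun i j =>
    if i ≠ j ∧ (i.val : ℤ) - j.val ≤ k ∧ (j.val : ℤ) - i.val ≤ k then 1 else 0

/-- Degree of node i in the k-connected path. -/
def pathDeg (n k : ℕ) (i : Fin n) : ℝ := ∑ j, pathAdj n k i j

/-- Normalized Laplacian `L = I − D^{−1/2} A D^{−1/2}` of the k-connected path. -/
noncomputable def pathLap (n k : ℕ) : Matrix (Fin n) (Fin n) ℝ :=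
  Matrix.of fun i j =>
    (if i = j then (1 : ℝ) else 0) -
      pathAdj n k i j / (Real.sqrt (pathDeg n k i) * Real.sqrt (pathDeg n k j))

/-- Second smallest eigenvalue `λ_{n−1}(L)` of the normalized Laplacian of the
k-connected path, via the variational characterization over the orthogonal
complement of `D^{1/2}𝟙`. -/
noncomputable def pathLamSecond (n k : ℕ) : ℝ :=
  sInf {r | ∃ x : Fin n → ℝ, x ≠ 0 ∧ (∑ i, x i * Real.sqrt (pathDeg n k i)) = 0 ∧
    r = (∑ i, x i * ((pathLap n k).mulVec x) i) / ∑ i, x i ^ 2}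

/-- Cheeger constant `h_G = min_S |E(S,Sᶜ)| / min{vol(S), vol(Sᶜ)}` of the
k-connected path. -/
noncomputable def pathCheeger (n k : ℕ) : ℝ :=
  sInf {r | ∃ S : Finset (Fin n), S.Nonempty ∧ Sᶜ.Nonempty ∧
    r = (∑ i ∈ S, ∑ j ∈ Sᶜ, pathAdj n k i j) /
      min (∑ i ∈ S, pathDeg n k i) (∑ i ∈ Sᶜ, pathDeg n k i)}

/-!
In the coordinates `w = D^{-1/2} x` the Rayleigh quotient of the normalized Laplacian is
`(1/2) ∑_{0 < |i - j| ≤ k} (wᵢ - wⱼ)² / ∑ dᵢ wᵢ²`, and all degrees lie in `[k, 2k]`.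

The linear test vector `wᵢ = i - c` has energy `O(n k³)` and mass `Ω(k n³)`, giving the upper bound.
For the lower bound, the constraint `∑ dᵢ wᵢ = 0` lets us recentre `w` at any `μ`, and a discrete
Poincaré inequality `k³ ∑ (wᵢ - μ)² ≤ 10 n² · energy` holds for the mean `μ` of the first window of
`k + 1` consecutive nodes: each `wᵢ` is close to the mean of a window containing `i`, and
consecutive window means differ by `(w_{s+k+1} - w_s) / (k + 1)`.

For the Cheeger constant, slide a window of `k + 1` nodes along the path. A window with `a` nodes in
`S` and `b` in `Sᶜ` sees `ab ≥ (k + 1) min(a, b) / 2` crossing edges, and an edge lies in at most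
`k + 1` windows. Either every window is at least a third full on one side, and then `∑ min(a, b)`
is at least a third of `|S|` or of `|Sᶜ|`, or the count `a` crosses the middle third one step at a
time, producing about `k / 3` windows with `min(a, b) ≥ k / 3`. With `k² ≤ n` both give
`|E(S, Sᶜ)| ≳ k² min(|S|, |Sᶜ|) / n`, against volumes at most `2k` times the cardinalities.
-/

open Finset

section Generic

variable {ι : Type*}

theorem two_mul_sum_mul_normalizedLaplacian_mulVec [Fintype ι] [DecidableEq ι]
    (A : Matrix ι ι ℝ) (d : ι → ℝ) (hA : ∀ i j, A i j = A j i) (hd : ∀ i, ∑ j, A i j = d i)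
    (hpos : ∀ i, 0 < d i) (x : ι → ℝ) :
    2 * ∑ i, x i * ∑ j, ((if i = j then 1 else 0) - A i j / (√(d i) * √(d j))) * x j =
      ∑ i, ∑ j, A i j * (x i / √(d i) - x j / √(d j)) ^ 2 := by
  set w : ι → ℝ := fun i => x i / √(d i)
  have hx : ∀ i, x i = √(d i) * w i := fun i => by
    simp only [w]; field_simp [(Real.sqrt_pos.2 (hpos i)).ne']
  have hrow : ∀ i, x i * ∑ j, ((if i = j then 1 else 0) - A i j / (√(d i) * √(d j))) * x j =
      d i * w i ^ 2 - ∑ j, A i j * (w i * w j) := by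
    intro i
    simp only [sub_mul, ite_mul, one_mul, zero_mul, sum_sub_distrib, sum_ite_eq, mem_univ,
      if_true, mul_sub, mul_sum]
    congr 1
    · rw [hx i]; linear_combination w i ^ 2 * Real.mul_self_sqrt (hpos i).le
    · refine sum_congr rfl fun j _ => ?_
      rw [hx i, hx j]
      field_simp [(Real.sqrt_pos.2 (hpos i)).ne', (Real.sqrt_pos.2 (hpos j)).ne']
  have hdeg : ∀ i, ∑ j, A i j * w i ^ 2 = d i * w i ^ 2 := fun i => by rw [← sum_mul, hd]
  have hdeg' : ∑ i, ∑ j, A i j * w j ^ 2 = ∑ j, d j * w j ^ 2 := by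
    rw [sum_comm]; exact sum_congr rfl fun j _ => by simp only [hA _ j]; exact hdeg j
  calc 2 * ∑ i, x i * ∑ j, ((if i = j then 1 else 0) - A i j / (√(d i) * √(d j))) * x j
      = ∑ i, ∑ j, A i j * w i ^ 2 + ∑ i, ∑ j, A i j * w j ^ 2
          - 2 * ∑ i, ∑ j, A i j * (w i * w j) := by
        simp only [hrow, hdeg, hdeg', sum_sub_distrib]; ring
    _ = ∑ i, ∑ j, A i j * (w i - w j) ^ 2 := by
        simp only [mul_sum, ← sum_add_distrib, ← sum_sub_distrib]
        exact sum_congr rfl fun i _ => sum_congr rfl fun j _ => by ring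

theorem sum_mul_sq_le_sum_mul_sub_sq (s : Finset ι) (d w : ι → ℝ) (hd : ∀ i ∈ s, 0 ≤ d i)
    (hw : ∑ i ∈ s, d i * w i = 0) (μ : ℝ) :
    ∑ i ∈ s, d i * w i ^ 2 ≤ ∑ i ∈ s, d i * (w i - μ) ^ 2 := by
  have hexpand : ∑ i ∈ s, d i * (w i - μ) ^ 2 =
      ∑ i ∈ s, d i * w i ^ 2 - 2 * μ * ∑ i ∈ s, d i * w i + μ ^ 2 * ∑ i ∈ s, d i := by
    simp only [mul_sum, ← sum_sub_distrib, ← sum_add_distrib]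
    exact sum_congr rfl fun i _ => by ring
  rw [hexpand, hw]
  nlinarith [sum_nonneg hd, sq_nonneg μ]

theorem card_mul_sq_sub_average_le (s : Finset ι) (f : ι → ℝ) (a : ℝ) :
    #s * (a - (∑ j ∈ s, f j) / #s) ^ 2 ≤ ∑ j ∈ s, (a - f j) ^ 2 := by
  rcases s.eq_empty_or_nonempty with rfl | hs
  · simp
  have hcard : (0 : ℝ) < #s := by exact_mod_cast hs.card_pos
  have hsub : a - (∑ j ∈ s, f j) / #s = (∑ j ∈ s, (a - f j)) / #s := by
    rw [sum_sub_distrib, sum_const, nsmul_eq_mul]; field_simp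
  rw [hsub, div_pow, mul_div_assoc', div_le_iff₀ (by positivity)]
  calc (#s : ℝ) * (∑ j ∈ s, (a - f j)) ^ 2 ≤ #s * (#s * ∑ j ∈ s, (a - f j) ^ 2) :=
        mul_le_mul_of_nonneg_left sq_sum_le_card_mul_sum_sq hcard.le
    _ = (∑ j ∈ s, (a - f j) ^ 2) * #s ^ 2 := by ring

end Generic

section Sequences

theorem sq_sub_le_mul_sum_sq_sub (u : ℕ → ℝ) (t : ℕ) :
    (u t - u 0) ^ 2 ≤ t * ∑ s ∈ range t, (u (s + 1) - u s) ^ 2 := by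
  rw [← sum_range_sub]
  simpa using sq_sum_le_card_mul_sum_sq (s := range t) (f := fun s => u (s + 1) - u s)

theorem sum_range_sub_sq (n : ℕ) (c : ℝ) :
    ∑ i ∈ range n, ((i : ℝ) - c) ^ 2 = n * (c - (n - 1) / 2) ^ 2 + n * (n ^ 2 - 1) / 12 := by
  induction n with
  | zero => simp
  | succ m ih => rw [sum_range_succ, ih]; push_cast; ring

theorem exists_eq_of_succ_le_add_one {f : ℕ → ℕ} (hf : ∀ t, f (t + 1) ≤ f t + 1) {t₁ t₂ v : ℕ}
    (h₁₂ : t₁ ≤ t₂) (h₁ : f t₁ ≤ v) (h₂ : v ≤ f t₂) : ∃ t ∈ Icc t₁ t₂, f t = v := by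
  induction t₂, h₁₂ using Nat.le_induction with
  | base => exact ⟨t₁, by simp, le_antisymm h₁ h₂⟩
  | succ m hm ih =>
    by_cases hv : v ≤ f m
    · obtain ⟨t, ht, hft⟩ := ih hv
      exact ⟨t, Icc_subset_Icc_right m.le_succ ht, hft⟩
    · exact ⟨m + 1, by simp; omega, by have := hf m; omega⟩

variable {a b : ℕ → ℕ} {N k : ℕ}

theorem sum_le_three_mul_sum_min (hab : ∀ t < N, a t + b t = k + 1)
    (ha : ∀ t < N, k + 1 ≤ 3 * a t) :
    ∑ t ∈ range N, b t ≤ 3 * ∑ t ∈ range N, min (a t) (b t) := by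
  rw [mul_sum]
  refine sum_le_sum fun t ht => ?_
  have := hab t (mem_range.1 ht)
  have := ha t (mem_range.1 ht)
  omega

/-- If `a` is small at `t₁` and large at `t₂ ≥ t₁`, it passes through every value of the middle
third `[q, k + 1 - q]`, at each of which `min a b ≥ q`. -/
theorem sq_le_nine_mul_sum_min_of_crossing (hab : ∀ t < N, a t + b t = k + 1)
    (ha : ∀ t, a (t + 1) ≤ a t + 1) {t₁ t₂ : ℕ} (h₁₂ : t₁ ≤ t₂) (h₂ : t₂ < N)
    (hat₁ : 3 * a t₁ < k + 1) (hbt₂ : 3 * b t₂ < k + 1) :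
    k * k ≤ 9 * ∑ t ∈ range N, min (a t) (b t) := by
  set q := (k + 3) / 3
  set T : Finset ℕ := {t ∈ range N | a t ∈ Icc q (k + 1 - q)}
  have hband : Set.SurjOn a T (Icc q (k + 1 - q)) := by
    intro v hv
    simp only [coe_Icc, Set.mem_Icc] at hv
    have := hab t₂ h₂
    obtain ⟨t, ht, rfl⟩ := exists_eq_of_succ_le_add_one ha h₁₂ (by omega : a t₁ ≤ v) (by omega)
    simp only [mem_Icc] at ht
    exact ⟨t, by simp [T, ht.2.trans_lt h₂, hv], rfl⟩
  calc k * k ≤ 9 * ((k + 1 - q + 1 - q) * q) := by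
        have h1 : k ≤ 3 * q := by omega
        have h2 : k ≤ 3 * (k + 1 - q + 1 - q) := by omega
        nlinarith [Nat.mul_le_mul h1 h2]
    _ ≤ 9 * (#T * q) := by
        gcongr
        simpa using card_le_card_of_surjOn a hband
    _ = 9 * ∑ t ∈ T, q := by simp
    _ ≤ 9 * ∑ t ∈ range N, min (a t) (b t) := by
        gcongr
        rw [sum_filter]
        refine sum_le_sum fun t ht => ?_
        have := hab t (mem_range.1 ht)
        split_ifs with h
        · simp only [mem_Icc] at h; omega
        · exact Nat.zero_le _

theorem sum_min_trichotomy (hab : ∀ t < N, a t + b t = k + 1)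
    (ha : ∀ t, a (t + 1) ≤ a t + 1) (hb : ∀ t, b (t + 1) ≤ b t + 1) :
    ∑ t ∈ range N, b t ≤ 3 * ∑ t ∈ range N, min (a t) (b t) ∨
      ∑ t ∈ range N, a t ≤ 3 * ∑ t ∈ range N, min (a t) (b t) ∨
      k * k ≤ 9 * ∑ t ∈ range N, min (a t) (b t) := by
  have hba : ∀ t < N, b t + a t = k + 1 := fun t ht => by rw [add_comm]; exact hab t ht
  have hmin : ∑ t ∈ range N, min (b t) (a t) = ∑ t ∈ range N, min (a t) (b t) := by
    simp only [min_comm]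
  by_cases hI : ∀ t < N, k + 1 ≤ 3 * a t
  · exact Or.inl (sum_le_three_mul_sum_min hab hI)
  by_cases hII : ∀ t < N, k + 1 ≤ 3 * b t
  · exact Or.inr (Or.inl (hmin ▸ sum_le_three_mul_sum_min hba hII))
  push Not at hI hII
  obtain ⟨t₁, ht₁, hat₁⟩ := hI
  obtain ⟨t₂, ht₂, hbt₂⟩ := hII
  refine Or.inr (Or.inr ?_)
  rcases le_total t₁ t₂ with h | h
  · exact sq_le_nine_mul_sum_min_of_crossing hab ha h ht₂ hat₁ hbt₂
  · exact hmin ▸ sq_le_nine_mul_sum_min_of_crossing hba hb h ht₁ hbt₂ hat₁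

end Sequences

section PathGraph

variable {n k : ℕ}

def pathNbrs (n k i : ℕ) : Finset ℕ := {j ∈ range n | i ≠ j ∧ i ≤ j + k ∧ j ≤ i + k}

def pathEnergy (n k : ℕ) (z : ℕ → ℝ) : ℝ := ∑ i ∈ range n, ∑ j ∈ pathNbrs n k i, (z i - z j) ^ 2

def window (k t : ℕ) : Finset ℕ := Icc t (t + k)

theorem pathAdj_apply (i j : Fin n) :
    pathAdj n k i j = if (j : ℕ) ∈ pathNbrs n k i then 1 else 0 := by
  simp only [pathAdj, Matrix.of_apply, pathNbrs, mem_filter, mem_range, j.isLt, true_and]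
  refine if_congr ?_ rfl rfl
  rw [Ne, Fin.ext_iff]
  omega

theorem pathNbrs_subset_range (i : ℕ) : pathNbrs n k i ⊆ range n := filter_subset _ _

theorem mem_pathNbrs_comm {i j : ℕ} (hi : i < n) (hj : j < n) :
    j ∈ pathNbrs n k i ↔ i ∈ pathNbrs n k j := by
  simp only [pathNbrs, mem_filter, mem_range]
  omega

theorem pathAdj_comm (i j : Fin n) : pathAdj n k i j = pathAdj n k j i := by
  simp only [pathAdj_apply, mem_pathNbrs_comm j.isLt i.isLt]

theorem pathDeg_eq_card (i : Fin n) : pathDeg n k i = #(pathNbrs n k i) := by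
  simp only [pathDeg, pathAdj_apply]
  rw [Fin.sum_univ_eq_sum_range (fun j => if j ∈ pathNbrs n k i then (1 : ℝ) else 0), sum_boole,
    filter_mem_eq_inter, inter_eq_right.2 (pathNbrs_subset_range _)]

theorem card_pathNbrs_le (i : ℕ) : #(pathNbrs n k i) ≤ 2 * k := by
  calc #(pathNbrs n k i) ≤ #((Icc (i - k) (i + k)).erase i) := by
        refine card_le_card fun j hj => ?_
        simp only [pathNbrs, mem_filter, mem_range] at hj
        simp only [mem_erase, mem_Icc]
        omega
    _ ≤ 2 * k := by
        rw [card_erase_of_mem (by simp), Nat.card_Icc]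
        omega

theorem card_window (k t : ℕ) : #(window k t) = k + 1 := by
  simp only [window, Nat.card_Icc]
  omega

theorem mem_window_min {i : ℕ} (hi : i < n) (hkn : k < n) : i ∈ window k (min i (n - k - 1)) := by
  simp only [window, mem_Icc]
  omega

theorem window_min_erase_subset_pathNbrs {i : ℕ} (hi : i < n) (hkn : k < n) :
    (window k (min i (n - k - 1))).erase i ⊆ pathNbrs n k i := by
  intro j hj
  simp only [window, mem_erase, mem_Icc] at hj
  simp only [pathNbrs, mem_filter, mem_range]
  omega

theorem le_card_pathNbrs {i : ℕ} (hi : i < n) (hkn : k < n) : k ≤ #(pathNbrs n k i) := by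
  have := card_le_card (window_min_erase_subset_pathNbrs hi hkn)
  rw [card_erase_of_mem (mem_window_min hi hkn), card_window] at this
  omega

theorem pathDeg_le (i : Fin n) : pathDeg n k i ≤ 2 * k := by
  rw [pathDeg_eq_card]; exact_mod_cast card_pathNbrs_le _

theorem le_pathDeg (hkn : k < n) (i : Fin n) : (k : ℝ) ≤ pathDeg n k i := by
  rw [pathDeg_eq_card]; exact_mod_cast le_card_pathNbrs i.isLt hkn

theorem sum_pathAdj_mul_sq_eq_pathEnergy (w : Fin n → ℝ) (z : ℕ → ℝ) (hz : ∀ i : Fin n, z i = w i) :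
    ∑ i, ∑ j, pathAdj n k i j * (w i - w j) ^ 2 = pathEnergy n k z := by
  simp only [pathAdj_apply, ite_mul, one_mul, zero_mul, ← hz]
  rw [Fin.sum_univ_eq_sum_range
    (fun i => ∑ j : Fin n, if (j : ℕ) ∈ pathNbrs n k i then (z i - z j) ^ 2 else 0)]
  refine sum_congr rfl fun i _ => ?_
  rw [Fin.sum_univ_eq_sum_range (fun j => if j ∈ pathNbrs n k i then (z i - z j) ^ 2 else 0),
    sum_ite_mem, inter_eq_right.2 (pathNbrs_subset_range _)]

theorem sum_sum_le_pathEnergy (T : Finset ℕ) (F : ℕ → Finset ℕ) (hT : T ⊆ range n)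
    (hF : ∀ i ∈ T, F i ⊆ pathNbrs n k i) (z : ℕ → ℝ) :
    ∑ i ∈ T, ∑ j ∈ F i, (z i - z j) ^ 2 ≤ pathEnergy n k z :=
  (sum_le_sum fun i hi => sum_le_sum_of_subset_of_nonneg (hF i hi) fun _ _ _ => sq_nonneg _).trans
    (sum_le_sum_of_subset_of_nonneg hT fun _ _ _ => sum_nonneg fun _ _ => sq_nonneg _)

end PathGraph

section Poincare

variable {n k : ℕ}

noncomputable def windowMean (k : ℕ) (z : ℕ → ℝ) (t : ℕ) : ℝ := (∑ j ∈ window k t, z j) / (k + 1)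

theorem windowMean_succ_sub (z : ℕ → ℝ) (t : ℕ) :
    windowMean k z (t + 1) - windowMean k z t = (z (t + k + 1) - z t) / (k + 1) := by
  have h₁ : window k (t + 1) = insert (t + k + 1) (Ioc t (t + k)) := by
    ext j; simp only [window, mem_Icc, mem_insert, mem_Ioc]; omega
  have h₂ : window k t = insert t (Ioc t (t + k)) := by
    ext j; simp only [window, mem_Icc, mem_insert, mem_Ioc]; omega
  rw [windowMean, windowMean, h₁, h₂, sum_insert (by simp), sum_insert (by simp)]
  ring

theorem mul_sq_sub_windowMean_le (z : ℕ → ℝ) (t : ℕ) (a : ℝ) :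
    (k + 1) * (a - windowMean k z t) ^ 2 ≤ ∑ j ∈ window k t, (a - z j) ^ 2 := by
  simpa [card_window, windowMean] using card_mul_sq_sub_average_le (window k t) z a

/-- Each `z i` is compared with the mean over the window `[τ, τ + k] ∋ i`, `τ = min i (n - k - 1)`,
whose other nodes are all neighbours of `i`. -/
theorem mul_sum_sq_sub_windowMean_le (hkn : k < n) (z : ℕ → ℝ) :
    (k + 1) * ∑ i ∈ range n, (z i - windowMean k z (min i (n - k - 1))) ^ 2 ≤
      pathEnergy n k z := by
  rw [mul_sum]
  calc ∑ i ∈ range n, (k + 1) * (z i - windowMean k z (min i (n - k - 1))) ^ 2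
      ≤ ∑ i ∈ range n, ∑ j ∈ (window k (min i (n - k - 1))).erase i, (z i - z j) ^ 2 := by
        refine sum_le_sum fun i _ => ?_
        rw [sum_erase _ (by simp)]
        exact mul_sq_sub_windowMean_le z _ _
    _ ≤ pathEnergy n k z := sum_sum_le_pathEnergy _ _ subset_rfl
        (fun i hi => window_min_erase_subset_pathNbrs (mem_range.1 hi) hkn) z

/-- A hop of length `k + 1` is routed through each of the `k` intermediate nodes. -/
theorem mul_sum_sq_hop_le (z : ℕ → ℝ) :
    (k : ℝ) * ∑ s ∈ range (n - k - 1), (z (s + k + 1) - z s) ^ 2 ≤ 4 * pathEnergy n k z := by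
  have hpoint : ∀ s, (k : ℝ) * (z (s + k + 1) - z s) ^ 2 ≤
      2 * ∑ m ∈ Ioo s (s + k + 1), (z s - z m) ^ 2 +
        2 * ∑ m ∈ Ioo s (s + k + 1), (z (s + k + 1) - z m) ^ 2 := by
    intro s
    have hcard : #(Ioo s (s + k + 1)) = k := by simp only [Nat.card_Ioo]; omega
    rw [mul_sum, mul_sum, ← sum_add_distrib]
    calc (k : ℝ) * (z (s + k + 1) - z s) ^ 2
        = ∑ _m ∈ Ioo s (s + k + 1), (z (s + k + 1) - z s) ^ 2 := by
          rw [sum_const, hcard, nsmul_eq_mul]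
      _ ≤ _ := sum_le_sum fun m _ => by
          nlinarith [sq_nonneg (z s + z (s + k + 1) - 2 * z m)]
  have hfirst : ∑ s ∈ range (n - k - 1), ∑ m ∈ Ioo s (s + k + 1), (z s - z m) ^ 2 ≤
      pathEnergy n k z :=
    sum_sum_le_pathEnergy _ _ (range_subset_range.2 (by omega))
      (fun s hs m hm => by
        simp only [mem_range] at hs; simp only [mem_Ioo] at hm
        simp only [pathNbrs, mem_filter, mem_range]; omega) z
  have hsecond : ∑ s ∈ range (n - k - 1), ∑ m ∈ Ioo s (s + k + 1), (z (s + k + 1) - z m) ^ 2 ≤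
      pathEnergy n k z := by
    have hshift := sum_map (range (n - k - 1)) (addRightEmbedding (k + 1))
      (fun u => ∑ m ∈ Ioo (u - (k + 1)) u, (z u - z m) ^ 2)
    simp only [addRightEmbedding_apply, Nat.add_sub_cancel] at hshift
    simp only [← add_assoc] at hshift
    rw [← hshift]
    refine sum_sum_le_pathEnergy _ _ (fun u hu => ?_) (fun u hu m hm => ?_) z
    all_goals
      simp only [mem_map, mem_range, addRightEmbedding_apply] at hu
      obtain ⟨s, hs, rfl⟩ := hu
    · simp only [mem_range]; omega
    · simp only [mem_Ioo] at hm
      simp only [pathNbrs, mem_filter, mem_range]; omega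
  calc (k : ℝ) * ∑ s ∈ range (n - k - 1), (z (s + k + 1) - z s) ^ 2
      ≤ ∑ s ∈ range (n - k - 1), (2 * ∑ m ∈ Ioo s (s + k + 1), (z s - z m) ^ 2 +
          2 * ∑ m ∈ Ioo s (s + k + 1), (z (s + k + 1) - z m) ^ 2) := by
        rw [mul_sum]; exact sum_le_sum fun s _ => hpoint s
    _ ≤ 4 * pathEnergy n k z := by
        rw [sum_add_distrib, ← mul_sum, ← mul_sum]; linarith

theorem pathEnergy_nonneg (z : ℕ → ℝ) : 0 ≤ pathEnergy n k z :=
  sum_nonneg fun _ _ => sum_nonneg fun _ _ => sq_nonneg _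

theorem mul_sum_sq_windowMean_sub_le (hkn : k < n) (z : ℕ → ℝ) :
    (k + 1) ^ 2 * ∑ i ∈ range n, (windowMean k z (min i (n - k - 1)) - windowMean k z 0) ^ 2 ≤
      n ^ 2 * ∑ s ∈ range (n - k - 1), (z (s + k + 1) - z s) ^ 2 := by
  set μ := windowMean k z
  set R := ∑ s ∈ range (n - k - 1), (z (s + k + 1) - z s) ^ 2
  have hpoint : ∀ i ∈ range n, (k + 1) ^ 2 * (μ (min i (n - k - 1)) - μ 0) ^ 2 ≤ n * R := by
    intro i _
    set t := min i (n - k - 1)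
    have hsteps : (k + 1) ^ 2 * ∑ s ∈ range t, (μ (s + 1) - μ s) ^ 2 =
        ∑ s ∈ range t, (z (s + k + 1) - z s) ^ 2 := by
      rw [mul_sum]
      refine sum_congr rfl fun s _ => ?_
      rw [windowMean_succ_sub]; field_simp
    calc (k + 1) ^ 2 * (μ t - μ 0) ^ 2 ≤ (k + 1) ^ 2 * (t * ∑ s ∈ range t, (μ (s + 1) - μ s) ^ 2) :=
          mul_le_mul_of_nonneg_left (sq_sub_le_mul_sum_sq_sub μ t) (by positivity)
      _ = t * ∑ s ∈ range t, (z (s + k + 1) - z s) ^ 2 := by rw [← hsteps]; ring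
      _ ≤ n * R := mul_le_mul (by exact_mod_cast (min_le_right _ _).trans (by omega))
          (sum_le_sum_of_subset_of_nonneg (range_subset_range.2 (min_le_right _ _))
            fun _ _ _ => sq_nonneg _) (sum_nonneg fun _ _ => sq_nonneg _) (Nat.cast_nonneg _)
  calc (k + 1) ^ 2 * ∑ i ∈ range n, (μ (min i (n - k - 1)) - μ 0) ^ 2
      ≤ ∑ _i ∈ range n, (n : ℝ) * R := by rw [mul_sum]; exact sum_le_sum hpoint
    _ = n ^ 2 * R := by rw [sum_const, card_range, nsmul_eq_mul]; ring

theorem pow_three_mul_sum_sq_sub_le (hkn : k < n) (z : ℕ → ℝ) :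
    (k : ℝ) ^ 3 * ∑ i ∈ range n, (z i - windowMean k z 0) ^ 2 ≤ 10 * n ^ 2 * pathEnergy n k z := by
  set μ := windowMean k z
  set E := pathEnergy n k z
  set L := ∑ i ∈ range n, (z i - μ (min i (n - k - 1))) ^ 2
  set M := ∑ i ∈ range n, (μ (min i (n - k - 1)) - μ 0) ^ 2
  set R := ∑ s ∈ range (n - k - 1), (z (s + k + 1) - z s) ^ 2
  have hk : (k : ℝ) ≤ n := by exact_mod_cast hkn.le
  have hk0 : (0 : ℝ) ≤ k := k.cast_nonneg
  have hL0 : 0 ≤ L := sum_nonneg fun _ _ => sq_nonneg _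
  have hM0 : 0 ≤ M := sum_nonneg fun _ _ => sq_nonneg _
  have hsplit : ∑ i ∈ range n, (z i - μ 0) ^ 2 ≤ 2 * L + 2 * M := by
    rw [mul_sum, mul_sum, ← sum_add_distrib]
    exact sum_le_sum fun i _ => by
      nlinarith [sq_nonneg (z i - 2 * μ (min i (n - k - 1)) + μ 0)]
  have hhop : k * R ≤ 4 * E := mul_sum_sq_hop_le z
  have hlocal : (k : ℝ) ^ 3 * L ≤ n ^ 2 * E :=
    calc (k : ℝ) ^ 3 * L ≤ k ^ 2 * ((k + 1) * L) := by nlinarith [sq_nonneg (k : ℝ)]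
      _ ≤ n ^ 2 * E := mul_le_mul (pow_le_pow_left₀ hk0 hk 2)
          (mul_sum_sq_sub_windowMean_le hkn z) (by positivity) (by positivity)
  have hglobal : (k : ℝ) ^ 3 * M ≤ n ^ 2 * (k * R) :=
    calc (k : ℝ) ^ 3 * M ≤ k * ((k + 1) ^ 2 * M) := by nlinarith [sq_nonneg (k : ℝ)]
      _ ≤ k * (n ^ 2 * R) := mul_le_mul_of_nonneg_left (mul_sum_sq_windowMean_sub_le hkn z) hk0
      _ = n ^ 2 * (k * R) := by ring
  calc (k : ℝ) ^ 3 * ∑ i ∈ range n, (z i - μ 0) ^ 2 ≤ (k : ℝ) ^ 3 * (2 * L + 2 * M) :=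
        mul_le_mul_of_nonneg_left hsplit (by positivity)
    _ ≤ 2 * (n ^ 2 * E) + 2 * (n ^ 2 * (4 * E)) := by
        nlinarith [mul_le_mul_of_nonneg_left hhop (sq_nonneg (n : ℝ))]
    _ = 10 * n ^ 2 * E := by ring

end Poincare

section Spectral

variable {n k : ℕ}

theorem pathDeg_pos (hk : 1 ≤ k) (hkn : k < n) (i : Fin n) : 0 < pathDeg n k i :=
  (Nat.cast_pos.2 hk).trans_le (le_pathDeg hkn i)

theorem two_mul_sum_mul_pathLap_mulVec (hk : 1 ≤ k) (hkn : k < n) (x : Fin n → ℝ) :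
    2 * ∑ i, x i * (pathLap n k *ᵥ x) i = ∑ i, ∑ j, pathAdj n k i j *
      (x i / √(pathDeg n k i) - x j / √(pathDeg n k j)) ^ 2 := by
  simpa only [Matrix.mulVec, dotProduct, pathLap, Matrix.of_apply] using
    two_mul_sum_mul_normalizedLaplacian_mulVec (pathAdj n k) (pathDeg n k) pathAdj_comm
      (fun _ => rfl) (pathDeg_pos hk hkn) x

theorem pathAdj_mul_sq_sub_le (i j : Fin n) :
    pathAdj n k i j * ((i : ℝ) - j) ^ 2 ≤ pathAdj n k i j * k ^ 2 := by
  rw [pathAdj_apply]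
  split_ifs with h
  · simp only [pathNbrs, mem_filter] at h
    have h₁ : (i : ℝ) ≤ j + k := by exact_mod_cast h.2.2.1
    have h₂ : (j : ℝ) ≤ i + k := by exact_mod_cast h.2.2.2
    rw [one_mul, one_mul]
    exact sq_le_sq' (by linarith) (by linarith)
  · simp

theorem sq_mul_sum_sq_le_sum_mul_pathLap_mulVec (hk : 1 ≤ k) (hkn : k < n) (x : Fin n → ℝ)
    (hx : ∑ i, x i * √(pathDeg n k i) = 0) :
    (k : ℝ) ^ 2 * ∑ i, x i ^ 2 ≤ 40 * n ^ 2 * ∑ i, x i * (pathLap n k *ᵥ x) i := by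
  have hd : ∀ i, 0 < pathDeg n k i := pathDeg_pos hk hkn
  set w : Fin n → ℝ := fun i => x i / √(pathDeg n k i)
  set z : ℕ → ℝ := fun j => if h : j < n then w ⟨j, h⟩ else 0
  set μ := windowMean k z 0
  have hz : ∀ i : Fin n, z i = w i := fun i => by simp [z]
  have hxw : ∀ i, x i = √(pathDeg n k i) * w i := fun i => by
    simp only [w]; field_simp [(Real.sqrt_pos.2 (hd i)).ne']
  have hsq : ∀ i, x i ^ 2 = pathDeg n k i * w i ^ 2 := fun i => by
    rw [hxw, mul_pow, Real.sq_sqrt (hd i).le]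
  have hcentre : ∑ i, pathDeg n k i * w i = 0 := by
    rw [← hx]
    refine sum_congr rfl fun i _ => ?_
    rw [hxw i, mul_right_comm, Real.mul_self_sqrt (hd i).le]
  have henergy : 2 * ∑ i, x i * (pathLap n k *ᵥ x) i = pathEnergy n k z := by
    rw [two_mul_sum_mul_pathLap_mulVec hk hkn]
    exact sum_pathAdj_mul_sq_eq_pathEnergy w z hz
  have hvar : ∑ i, pathDeg n k i * w i ^ 2 ≤ 2 * k * ∑ j ∈ range n, (z j - μ) ^ 2 := by
    calc ∑ i, pathDeg n k i * w i ^ 2 ≤ ∑ i, pathDeg n k i * (w i - μ) ^ 2 :=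
          sum_mul_sq_le_sum_mul_sub_sq _ _ w (fun i _ => (hd i).le) hcentre μ
      _ ≤ ∑ i : Fin n, 2 * k * (z i - μ) ^ 2 :=
          sum_le_sum fun i _ => by
            rw [hz]; exact mul_le_mul_of_nonneg_right (pathDeg_le i) (sq_nonneg _)
      _ = 2 * k * ∑ j ∈ range n, (z j - μ) ^ 2 := by
          rw [← mul_sum, Fin.sum_univ_eq_sum_range (fun j => (z j - μ) ^ 2)]
  have hpoincare := pow_three_mul_sum_sq_sub_le hkn z
  simp only [hsq]
  nlinarith [mul_le_mul_of_nonneg_left hvar (sq_nonneg (k : ℝ))]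

theorem sum_mul_pathLap_mulVec_le_of_linear (hk : 1 ≤ k) (hkn : k < n) {x : Fin n → ℝ} {c : ℝ}
    (hx : ∀ i, x i = √(pathDeg n k i) * (i - c)) :
    ∑ i, x i * (pathLap n k *ᵥ x) i ≤ k ^ 3 * n := by
  have hxd : ∀ i, x i / √(pathDeg n k i) = i - c := fun i => by
    rw [hx]; field_simp [(Real.sqrt_pos.2 (pathDeg_pos hk hkn i)).ne']
  suffices 2 * ∑ i, x i * (pathLap n k *ᵥ x) i ≤ 2 * (k ^ 3 * n) by linarith
  rw [two_mul_sum_mul_pathLap_mulVec hk hkn]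
  simp only [hxd, sub_sub_sub_cancel_right]
  calc ∑ i, ∑ j, pathAdj n k i j * ((i : ℝ) - j) ^ 2 ≤ ∑ i, ∑ j, pathAdj n k i j * k ^ 2 :=
        sum_le_sum fun i _ => sum_le_sum fun j _ => pathAdj_mul_sq_sub_le i j
    _ ≤ ∑ _i : Fin n, 2 * (k : ℝ) * k ^ 2 := sum_le_sum fun i _ => by
        rw [← sum_mul]; exact mul_le_mul_of_nonneg_right (pathDeg_le i) (by positivity)
    _ = 2 * (k ^ 3 * n) := by simp only [sum_const, card_univ, Fintype.card_fin, nsmul_eq_mul]; ring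

theorem le_sum_sq_of_linear (hk : 1 ≤ k) (hkn : k < n) {x : Fin n → ℝ} {c : ℝ}
    (hx : ∀ i, x i = √(pathDeg n k i) * (i - c)) :
    k * (n : ℝ) ^ 3 / 24 ≤ ∑ i, x i ^ 2 := by
  have hn : (2 : ℝ) ≤ n := by exact_mod_cast (by omega : 2 ≤ n)
  have hmin : (n : ℝ) ^ 3 / 24 ≤ n * (c - (n - 1) / 2) ^ 2 + n * (n ^ 2 - 1) / 12 := by
    nlinarith [mul_nonneg (Nat.cast_nonneg n : (0 : ℝ) ≤ n) (sq_nonneg (c - (n - 1) / 2))]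
  calc k * (n : ℝ) ^ 3 / 24 ≤ k * (n * (c - (n - 1) / 2) ^ 2 + n * (n ^ 2 - 1) / 12) := by
        rw [mul_div_assoc]; exact mul_le_mul_of_nonneg_left hmin (Nat.cast_nonneg k)
    _ = ∑ i : Fin n, k * ((i : ℝ) - c) ^ 2 := by
        rw [← mul_sum, Fin.sum_univ_eq_sum_range (fun j => ((j : ℝ) - c) ^ 2), sum_range_sub_sq]
    _ ≤ ∑ i, x i ^ 2 := sum_le_sum fun i _ => by
        rw [hx, mul_pow, Real.sq_sqrt (pathDeg_pos hk hkn i).le]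
        exact mul_le_mul_of_nonneg_right (le_pathDeg hkn i) (sq_nonneg _)

theorem exists_pathLap_rayleigh_le (hk : 1 ≤ k) (hkn : k < n) :
    ∃ x : Fin n → ℝ, x ≠ 0 ∧ ∑ i, x i * √(pathDeg n k i) = 0 ∧
      (∑ i, x i * (pathLap n k *ᵥ x) i) / ∑ i, x i ^ 2 ≤ 24 * k ^ 2 / n ^ 2 := by
  have hd : ∀ i, 0 < pathDeg n k i := pathDeg_pos hk hkn
  have hvol : 0 < ∑ i, pathDeg n k i := sum_pos (fun i _ => hd i) ⟨⟨0, by omega⟩, mem_univ _⟩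
  set c := (∑ i, pathDeg n k i * i) / ∑ i, pathDeg n k i
  set x : Fin n → ℝ := fun i => √(pathDeg n k i) * (i - c)
  have hcentre : ∑ i, x i * √(pathDeg n k i) = 0 := by
    have : ∀ i, x i * √(pathDeg n k i) = pathDeg n k i * i - c * pathDeg n k i := fun i => by
      simp only [x]; rw [mul_comm, ← mul_assoc, Real.mul_self_sqrt (hd i).le]; ring
    simp only [this, sum_sub_distrib, ← mul_sum, c]
    field_simp
    ring
  have hnum := sum_mul_pathLap_mulVec_le_of_linear hk hkn (x := x) fun _ => rfl
  have hden := le_sum_sq_of_linear hk hkn (x := x) fun _ => rfl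
  have hk' : (0 : ℝ) < k := by exact_mod_cast hk
  have hn' : (0 : ℝ) < n := by exact_mod_cast (by omega : 0 < n)
  have hpos : 0 < ∑ i, x i ^ 2 := lt_of_lt_of_le (by positivity) hden
  refine ⟨x, fun h => by simp [h] at hpos, hcentre, ?_⟩
  rw [div_le_div_iff₀ hpos (by positivity)]
  nlinarith [mul_le_mul_of_nonneg_left hden (by positivity : (0 : ℝ) ≤ 24 * k ^ 2)]

theorem le_pathLap_rayleigh (hk : 1 ≤ k) (hkn : k < n) {x : Fin n → ℝ} (hx : x ≠ 0)
    (hc : ∑ i, x i * √(pathDeg n k i) = 0) :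
    1 / 40 * (k : ℝ) ^ 2 / n ^ 2 ≤ (∑ i, x i * (pathLap n k *ᵥ x) i) / ∑ i, x i ^ 2 := by
  obtain ⟨i, hi⟩ := Function.ne_iff.1 hx
  have hpos : 0 < ∑ i, x i ^ 2 :=
    sum_pos' (fun i _ => sq_nonneg (x i)) ⟨i, mem_univ _, (sq_nonneg _).lt_of_ne' (pow_ne_zero 2 hi)⟩
  have hn : (0 : ℝ) < n := by exact_mod_cast (by omega : 0 < n)
  rw [le_div_iff₀ hpos, div_mul_eq_mul_div, div_le_iff₀ (by positivity)]
  linarith [sq_mul_sum_sq_le_sum_mul_pathLap_mulVec hk hkn x hc]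

theorem pathLamSecond_ge (hk : 1 ≤ k) (hkn : k < n) :
    1 / 40 * (k : ℝ) ^ 2 / n ^ 2 ≤ pathLamSecond n k := by
  obtain ⟨x, hx, hc, -⟩ := exists_pathLap_rayleigh_le hk hkn
  refine le_csInf ⟨_, x, hx, hc, rfl⟩ ?_
  rintro _ ⟨y, hy, hyc, rfl⟩
  exact le_pathLap_rayleigh hk hkn hy hyc

theorem pathLamSecond_le (hk : 1 ≤ k) (hkn : k < n) :
    pathLamSecond n k ≤ 24 * (k : ℝ) ^ 2 / n ^ 2 := by
  obtain ⟨x, hx, hc, hle⟩ := exists_pathLap_rayleigh_le hk hkn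
  refine le_trans (csInf_le ?_ ⟨x, hx, hc, rfl⟩) hle
  refine ⟨1 / 40 * (k : ℝ) ^ 2 / n ^ 2, ?_⟩
  rintro _ ⟨y, hy, hyc, rfl⟩
  exact le_pathLap_rayleigh hk hkn hy hyc

end Spectral

section Cheeger

variable {n k : ℕ}

def winCount (n k : ℕ) (A : Finset (Fin n)) (t : ℕ) : ℕ := #{i ∈ A | ((i : Fin n) : ℕ) ∈ window k t}

theorem winCount_add_winCount_compl (S : Finset (Fin n)) {t : ℕ} (ht : t + k < n) :
    winCount n k S t + winCount n k Sᶜ t = k + 1 := by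
  have hwindow : #{i : Fin n | (i : ℕ) ∈ window k t} = k + 1 := by
    rw [card_filter, Fin.sum_univ_eq_sum_range (fun j => if j ∈ window k t then 1 else 0),
      ← card_filter, filter_mem_eq_inter, inter_eq_right.2, card_window]
    intro j hj
    simp only [window, mem_Icc] at hj
    simp only [mem_range]; omega
  rw [winCount, winCount, ← card_union_of_disjoint (disjoint_filter_filter disjoint_compl_right),
    ← filter_union, union_compl, hwindow]

theorem winCount_succ_le (A : Finset (Fin n)) (t : ℕ) :
    winCount n k A (t + 1) ≤ winCount n k A t + 1 := by
  have hnew : #{i ∈ A | ((i : Fin n) : ℕ) = t + k + 1} ≤ 1 :=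
    card_le_one.2 fun i hi j hj => Fin.ext ((mem_filter.1 hi).2.trans (mem_filter.1 hj).2.symm)
  calc winCount n k A (t + 1)
      ≤ #({i ∈ A | ((i : Fin n) : ℕ) ∈ window k t} ∪ {i ∈ A | ((i : Fin n) : ℕ) = t + k + 1}) := by
        refine card_le_card fun i hi => ?_
        obtain ⟨hA, hw⟩ := mem_filter.1 hi
        simp only [mem_union, mem_filter, hA, true_and, window, mem_Icc] at hw ⊢
        omega
    _ ≤ winCount n k A t + 1 := (card_union_le _ _).trans (by rw [winCount]; omega)

theorem card_le_sum_winCount (hkn : k < n) (A : Finset (Fin n)) :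
    #A ≤ ∑ t ∈ range (n - k), winCount n k A t := by
  simp only [winCount, card_filter]
  rw [sum_comm, card_eq_sum_ones]
  refine sum_le_sum fun i _ => ?_
  have hτ : min (i : ℕ) (n - k - 1) ∈ range (n - k) := by simp only [mem_range]; omega
  calc 1 = if (i : ℕ) ∈ window k (min i (n - k - 1)) then 1 else 0 := by
        rw [if_pos (mem_window_min i.isLt hkn)]
    _ ≤ _ := single_le_sum (f := fun t => if (i : ℕ) ∈ window k t then (1 : ℕ) else 0)
        (fun _ _ => Nat.zero_le _) hτ

theorem card_windows_containing_le {i j : Fin n} (hij : i ≠ j) :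
    (#{t ∈ range (n - k) | (i : ℕ) ∈ window k t ∧ (j : ℕ) ∈ window k t} : ℝ) ≤
      (k + 1) * pathAdj n k i j := by
  rw [pathAdj_apply]
  split_ifs with h
  · rw [mul_one]
    calc (#{t ∈ range (n - k) | (i : ℕ) ∈ window k t ∧ (j : ℕ) ∈ window k t} : ℝ)
        ≤ #(Icc ((i : ℕ) - k) i) := by
          refine Nat.cast_le.2 (card_le_card fun t ht => ?_)
          simp only [mem_filter, window, mem_Icc] at ht ⊢
          omega
      _ ≤ k + 1 := by
          rw [Nat.card_Icc]; exact_mod_cast (by omega)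
  · rw [mul_zero, Nat.cast_nonpos, card_eq_zero, filter_eq_empty_iff]
    intro t _ hw
    simp only [window, mem_Icc] at hw
    simp only [pathNbrs, mem_filter, mem_range, j.isLt, true_and, ne_eq, Fin.val_inj, hij,
      not_false_eq_true] at h
    omega

theorem sum_winCount_mul_le (S : Finset (Fin n)) :
    ∑ t ∈ range (n - k), (winCount n k S t : ℝ) * winCount n k Sᶜ t ≤
      (k + 1) * ∑ i ∈ S, ∑ j ∈ Sᶜ, pathAdj n k i j := by
  simp only [winCount, natCast_card_filter, sum_mul_sum, ite_zero_mul_ite_zero, mul_one]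
  rw [sum_comm, mul_sum]
  refine sum_le_sum fun i hi => ?_
  rw [sum_comm, mul_sum]
  refine sum_le_sum fun j hj => ?_
  rw [← natCast_card_filter]
  exact card_windows_containing_le (by rintro rfl; exact mem_compl.1 hj hi)

theorem add_mul_min_le (a b : ℕ) : (a + b) * min a b ≤ 2 * (a * b) := by
  rcases le_total a b with h | h
  · rw [min_eq_left h]; nlinarith
  · rw [min_eq_right h]; nlinarith

theorem sum_min_winCount_le_two_mul_cut (S : Finset (Fin n)) :
    (∑ t ∈ range (n - k), min (winCount n k S t) (winCount n k Sᶜ t) : ℝ) ≤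
      2 * ∑ i ∈ S, ∑ j ∈ Sᶜ, pathAdj n k i j := by
  have hpoint : ∀ t ∈ range (n - k),
      ((k : ℝ) + 1) * min (winCount n k S t : ℝ) (winCount n k Sᶜ t) ≤
      2 * ((winCount n k S t : ℝ) * winCount n k Sᶜ t) := by
    intro t ht
    have := add_mul_min_le (winCount n k S t) (winCount n k Sᶜ t)
    rw [winCount_add_winCount_compl S (by simp only [mem_range] at ht; omega)] at this
    exact_mod_cast this
  have := (sum_le_sum hpoint).trans_eq (mul_sum _ _ _).symm
  rw [← mul_sum] at this
  nlinarith [sum_winCount_mul_le (k := k) S]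

theorem sq_mul_min_card_le (hk : k * k ≤ n) (hkn : k < n) (S : Finset (Fin n)) :
    k * k * min #S #Sᶜ ≤
      9 * n * ∑ t ∈ range (n - k), min (winCount n k S t) (winCount n k Sᶜ t) := by
  have hS := card_le_sum_winCount hkn S
  have hSc := card_le_sum_winCount hkn Sᶜ
  have hn : min #S #Sᶜ ≤ n := (min_le_left _ _).trans (by simpa using card_le_univ S)
  have htri := sum_min_trichotomy (N := n - k) (k := k) (a := winCount n k S)
    (b := winCount n k Sᶜ) (fun t ht => winCount_add_winCount_compl S (by omega))
    (winCount_succ_le S) (winCount_succ_le Sᶜ)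
  generalize ∑ t ∈ range (n - k), min (winCount n k S t) (winCount n k Sᶜ t) = σ at htri ⊢
  rcases htri with h | h | h
  · calc k * k * min #S #Sᶜ ≤ n * #Sᶜ := Nat.mul_le_mul hk (min_le_right _ _)
      _ ≤ n * (3 * σ) := Nat.mul_le_mul_left _ (hSc.trans h)
      _ ≤ 9 * n * σ := by nlinarith [Nat.zero_le (n * σ)]
  · calc k * k * min #S #Sᶜ ≤ n * #S := Nat.mul_le_mul hk (min_le_left _ _)
      _ ≤ n * (3 * σ) := Nat.mul_le_mul_left _ (hS.trans h)
      _ ≤ 9 * n * σ := by nlinarith [Nat.zero_le (n * σ)]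
  · calc k * k * min #S #Sᶜ ≤ k * k * n := Nat.mul_le_mul_left _ hn
      _ ≤ 9 * n * σ := by nlinarith [Nat.mul_le_mul_right n h]

theorem sum_pathDeg_le (A : Finset (Fin n)) : ∑ i ∈ A, pathDeg n k i ≤ 2 * k * #A := by
  calc ∑ i ∈ A, pathDeg n k i ≤ ∑ _i ∈ A, 2 * (k : ℝ) := sum_le_sum fun i _ => pathDeg_le i
    _ = 2 * k * #A := by rw [sum_const, nsmul_eq_mul]; ring

theorem pathCheeger_ge (hk : 1 ≤ k) (hkn : k < n) (hkk : k * k ≤ n) :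
    1 / 36 * (k : ℝ) / n ≤ pathCheeger n k := by
  have hn' : (0 : ℝ) < n := by exact_mod_cast (by omega : 0 < n)
  refine le_csInf
    ⟨_, {⟨0, by omega⟩}, singleton_nonempty _, ⟨⟨1, by omega⟩, by simp [Fin.ext_iff]⟩, rfl⟩ ?_
  rintro r ⟨S, hS, hSc, rfl⟩
  set m := min #S #Sᶜ
  set cut := ∑ i ∈ S, ∑ j ∈ Sᶜ, pathAdj n k i j
  have hm : (0 : ℝ) < m := by exact_mod_cast lt_min hS.card_pos hSc.card_pos
  have hcut : (k : ℝ) ^ 2 * m ≤ 18 * n * cut := by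
    have h₁ : ((k * k * m : ℕ) : ℝ) ≤ ((9 * n * _ : ℕ) : ℝ) :=
      Nat.cast_le.2 (sq_mul_min_card_le hkk hkn S)
    push_cast at h₁
    nlinarith [sum_min_winCount_le_two_mul_cut (k := k) S]
  have hvol_pos : ∀ A : Finset (Fin n), A.Nonempty → 0 < ∑ i ∈ A, pathDeg n k i :=
    fun A hA => sum_pos (fun i _ => pathDeg_pos hk hkn i) hA
  have hvol : min (∑ i ∈ S, pathDeg n k i) (∑ i ∈ Sᶜ, pathDeg n k i) ≤ 2 * k * m := by
    rcases min_choice #S #Sᶜ with h | h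
    · rw [show (m : ℝ) = #S by simp [m, h]]
      exact (min_le_left _ _).trans (sum_pathDeg_le S)
    · rw [show (m : ℝ) = #Sᶜ by simp [m, h]]
      exact (min_le_right _ _).trans (sum_pathDeg_le Sᶜ)
  rw [le_div_iff₀ (lt_min (hvol_pos S hS) (hvol_pos Sᶜ hSc))]
  calc 1 / 36 * (k : ℝ) / n * min (∑ i ∈ S, pathDeg n k i) (∑ i ∈ Sᶜ, pathDeg n k i)
      ≤ 1 / 36 * k / n * (2 * k * m) := mul_le_mul_of_nonneg_left hvol (by positivity)
    _ = k ^ 2 * m / (18 * n) := by field_simp; ring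
    _ ≤ cut := by rw [div_le_iff₀ (by positivity)]; linarith

end Cheeger

/-- For the k-connected path on n nodes with `k ≤ √n`,
`λ_{n−1}(L) = Θ(k²/n²)`; in particular the Cheeger constant satisfies
`h_G = Ω(k/n)`. -/
theorem kPath_lambda_theta :
    ∃ c₁ c₂ c₃ : ℝ, 0 < c₁ ∧ 0 < c₂ ∧ 0 < c₃ ∧
      ∀ n k : ℕ, 2 ≤ n → 1 ≤ k → k * k ≤ n →
        c₁ * k ^ 2 / n ^ 2 ≤ pathLamSecond n k ∧
        pathLamSecond n k ≤ c₂ * k ^ 2 / n ^ 2 ∧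
        c₃ * k / n ≤ pathCheeger n k := by
  refine ⟨1 / 40, 24, 1 / 36, by norm_num, by norm_num, by norm_num, fun n k _ hk hkk => ?_⟩
  have hkn : k < n := by nlinarith
  exact ⟨pathLamSecond_ge hk hkn, pathLamSecond_le hk hkn, pathCheeger_ge hk hkn hkk⟩
end
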